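/- arXiv:0908.2516 — 10 statements merged into one kernel-verified Lean document; each statement's English description precedes it below -/
import Mathlib

section
/- Let n and m be positive integers and let a, d1, d2 be elements of Z/nZ. If the doubly arithmetic triangle DAT(a,d1,d2,m) = {a + i·d1 + j·d2 : 0 ≤ i ≤ m-1, 0 ≤ j ≤ m-1-i} (as a multiset) is balanced in Z/nZ, then d1, d2 and d1 - d2 are all invertible in Z/nZ. -/
def DAT (n : ℕ) (a d1 d2 : ZMod n) (m : ℕ) : Multiset (ZMod n) :=
  ((Finset.range m ×ˢ Finset.range m).filter (fun p => p.1 + p.2 < m)).val.map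
    (fun p => a + p.1 • d1 + p.2 • d2)

def IsBalanced {n : ℕ} (M : Multiset (ZMod n)) : Prop :=
  ∀ x y : ZMod n, M.count x = M.count y

/-!
If `d1` is not a unit, some prime `p ∣ n` divides it. Balancedness is invariance under all
translations, so it passes to the image in `ZMod p`, where the triangle collapses to the
progression `b + j • e` with multiplicity `m - j`. That multiset is never balanced: the shift
`(i, j) ↦ (i + 1, j - 1)` of the index triangle shows that `b + e` is hit fewer times than `b`
(and if `e = 0`, `b + 1` is not hit at all). The cases of `d2` and `d1 - d2` reduce to that of
`d1` through the symmetries `(i, j) ↦ (j, i)` and `(i, j) ↦ (i, m - 1 - i - j)` of the triangle.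
-/

open Finset

theorem Finset.val_map_eq_self_of_invOn {α : Type*} {s : Finset α} {σ : α → α}
    (hmaps : Set.MapsTo σ s s) (hinv : Set.InvOn σ σ s s) : s.val.map σ = s.val := by
  classical
  have hbij := hinv.bijOn hmaps hmaps
  have himage : s.image σ = s := coe_inj.1 (by rw [coe_image, hbij.image_eq])
  rw [← image_val_of_injOn hbij.injOn, himage]

def triangle (m : ℕ) : Finset (ℕ × ℕ) :=
  (range m ×ˢ range m).filter (fun p => p.1 + p.2 < m)

@[simp]
theorem mem_triangle {m : ℕ} {q : ℕ × ℕ} : q ∈ triangle m ↔ q.1 + q.2 < m := by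
  simp only [triangle, mem_filter, mem_product, mem_range]
  omega

theorem DAT_eq_map_triangle (n : ℕ) (a d1 d2 : ZMod n) (m : ℕ) :
    DAT n a d1 d2 m = (triangle m).val.map (fun q => a + q.1 • d1 + q.2 • d2) := rfl

theorem DAT_comm (n : ℕ) (a d1 d2 : ZMod n) (m : ℕ) :
    DAT n a d2 d1 m = DAT n a d1 d2 m := by
  have hswap : (triangle m).val.map Prod.swap = (triangle m).val :=
    val_map_eq_self_of_invOn (fun q hq => by simpa [add_comm] using hq)
      ⟨fun q _ => q.swap_swap, fun q _ => q.swap_swap⟩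
  rw [DAT_eq_map_triangle, DAT_eq_map_triangle]
  conv_rhs => rw [← hswap, Multiset.map_map]
  refine Multiset.map_congr rfl fun q _ => ?_
  simp only [Function.comp_apply, Prod.fst_swap, Prod.snd_swap]
  abel

theorem DAT_reflect (n : ℕ) (a d1 d2 : ZMod n) (m : ℕ) :
    DAT n (a + (m - 1) • d2) (d1 - d2) (-d2) m = DAT n a d1 d2 m := by
  set σ : ℕ × ℕ → ℕ × ℕ := fun q => (q.1, m - 1 - q.1 - q.2)
  have hσ : Set.MapsTo σ (triangle m) (triangle m) := fun q hq => by
    simp only [mem_coe, mem_triangle, σ] at hq ⊢; omega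
  have hσσ : Set.LeftInvOn σ σ (triangle m) := fun q hq => by
    simp only [mem_coe, mem_triangle] at hq
    simp only [σ, Prod.ext_iff, true_and]
    omega
  have hrefl : (triangle m).val.map σ = (triangle m).val :=
    val_map_eq_self_of_invOn hσ ⟨hσσ, hσσ⟩
  rw [DAT_eq_map_triangle, DAT_eq_map_triangle]
  conv_lhs => rw [← hrefl, Multiset.map_map]
  refine Multiset.map_congr rfl fun ⟨i, j⟩ hq => ?_
  have hij : i + j ≤ m - 1 := by simp only [Finset.mem_val, mem_triangle] at hq; omega
  simp only [Function.comp_apply, σ]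
  rw [Nat.sub_sub (m - 1), sub_nsmul _ hij]
  simp only [nsmul_eq_mul, Nat.cast_add]
  ring

theorem isBalanced_iff_map_add_eq_self {n : ℕ} {M : Multiset (ZMod n)} :
    IsBalanced M ↔ ∀ z, M.map (· + z) = M := by
  have hcount : ∀ x z, (M.map (· + z)).count x = M.count (x - z) := fun x z => by
    simpa using Multiset.count_map_eq_count' (· + z) M (add_left_injective z) (x - z)
  refine ⟨fun h z => Multiset.ext.2 fun x => by rw [hcount, h], fun h x y => ?_⟩
  rw [← sub_sub_cancel x y, ← hcount, h]

theorem IsBalanced.map {n k : ℕ} {F : Type*} [FunLike F (ZMod n) (ZMod k)]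
    [AddMonoidHomClass F (ZMod n) (ZMod k)] {f : F} (hf : Function.Surjective f)
    {M : Multiset (ZMod n)} (hM : IsBalanced M) : IsBalanced (M.map f) := by
  rw [isBalanced_iff_map_add_eq_self] at hM ⊢
  intro z
  obtain ⟨w, rfl⟩ := hf z
  conv_rhs => rw [← hM w]
  simp only [Multiset.map_map, Function.comp_def, map_add]

theorem DAT_map {n k : ℕ} {F : Type*} [FunLike F (ZMod n) (ZMod k)]
    [AddMonoidHomClass F (ZMod n) (ZMod k)] (f : F) (a d1 d2 : ZMod n) (m : ℕ) :
    (DAT n a d1 d2 m).map f = DAT k (f a) (f d1) (f d2) m := by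
  simp only [DAT_eq_map_triangle, Multiset.map_map, Function.comp_def, map_add, map_nsmul]

theorem count_DAT_zero_left {k : ℕ} (b e : ZMod k) (m : ℕ) (x : ZMod k) :
    (DAT k b 0 e m).count x = #{q ∈ triangle m | b + q.2 • e = x} := by
  rw [DAT_eq_map_triangle, Multiset.count_map, card_def, filter_val]
  simp only [smul_zero, add_zero, eq_comm]

theorem count_DAT_zero_left_add_lt {k : ℕ} (b e : ZMod k) (he : e ≠ 0) {m : ℕ} (hm : 0 < m) :
    (DAT k b 0 e m).count (b + e) < (DAT k b 0 e m).count b := by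
  rw [count_DAT_zero_left, count_DAT_zero_left]
  have hpred : ∀ q ∈ {q ∈ triangle m | b + q.2 • e = b + e},
      q.1 + q.2 < m ∧ 0 < q.2 ∧ b + (q.2 - 1) • e = b := by
    rintro ⟨i, _ | j⟩ hq <;> simp only [mem_filter, mem_triangle] at hq
    · simp [he] at hq
    · exact ⟨hq.1, j.succ_pos, by simpa [succ_nsmul, ← add_assoc, -nsmul_eq_mul] using hq.2⟩
  have h00 : ((0, 0) : ℕ × ℕ) ∈ {q ∈ triangle m | b + q.2 • e = b} := by simp [hm]
  refine (card_le_card_of_injOn (fun q => (q.1 + 1, q.2 - 1)) ?_ ?_).trans_lt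
    (card_erase_lt_of_mem h00)
  · intro q hq
    obtain ⟨hlt, hpos, hq⟩ := hpred q hq
    simp only [coe_erase, coe_filter, Set.mem_sdiff, Set.mem_ofPred_eq, mem_triangle,
      Set.mem_singleton_iff, Prod.ext_iff]
    exact ⟨⟨by omega, hq⟩, by omega⟩
  · intro q hq q' hq' hEq
    obtain ⟨-, hpos, -⟩ := hpred q hq
    obtain ⟨-, hpos', -⟩ := hpred q' hq'
    simp only [Prod.ext_iff] at hEq ⊢
    omega

theorem not_isBalanced_DAT_zero_left {k : ℕ} [Nontrivial (ZMod k)] (b e : ZMod k) {m : ℕ}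
    (hm : 0 < m) : ¬IsBalanced (DAT k b 0 e m) := by
  intro h
  by_cases he : e = 0
  · have hlt : (DAT k b 0 e m).count (b + 1) < (DAT k b 0 e m).count b := by
      simp only [count_DAT_zero_left, he, smul_zero, add_zero, left_eq_add, one_ne_zero,
        filter_false, filter_true, card_empty, card_pos]
      exact ⟨(0, 0), by simp [hm]⟩
    exact hlt.ne (h _ _)
  · exact (count_DAT_zero_left_add_lt b e he hm).ne (h _ _)

theorem ZMod.exists_prime_dvd_castHom_eq_zero {n : ℕ} [NeZero n] {x : ZMod n}
    (hx : ¬IsUnit x) : ∃ (p : ℕ) (_ : p.Prime) (hpn : p ∣ n), ZMod.castHom hpn (ZMod p) x = 0 := by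
  rw [← ZMod.natCast_zmod_val x, ZMod.isUnit_iff_coprime, Nat.Prime.not_coprime_iff_dvd] at hx
  obtain ⟨p, hp, hpx, hpn⟩ := hx
  refine ⟨p, hp, hpn, ?_⟩
  rw [← ZMod.natCast_zmod_val x, map_natCast, ZMod.natCast_eq_zero_iff]
  exact hpx

theorem isUnit_of_isBalanced_DAT {n m : ℕ} [NeZero n] (hm : 0 < m) {a d1 d2 : ZMod n}
    (h : IsBalanced (DAT n a d1 d2 m)) : IsUnit d1 := by
  by_contra hd1
  obtain ⟨p, hp, hpn, hpd1⟩ := ZMod.exists_prime_dvd_castHom_eq_zero hd1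
  have : Fact p.Prime := ⟨hp⟩
  have hbal := h.map (ZMod.castHom_surjective hpn)
  rw [DAT_map, hpd1] at hbal
  exact not_isBalanced_DAT_zero_left _ _ hm hbal

theorem stmt0 (n m : ℕ) (hn : 0 < n) (hm : 0 < m) (a d1 d2 : ZMod n)
    (h : IsBalanced (DAT n a d1 d2 m)) :
    IsUnit d1 ∧ IsUnit d2 ∧ IsUnit (d1 - d2) := by
  have : NeZero n := ⟨hn.ne'⟩
  have hcomm : IsBalanced (DAT n a d2 d1 m) := by rwa [DAT_comm]
  have hrefl : IsBalanced (DAT n (a + (m - 1) • d2) (d1 - d2) (-d2) m) := by rwa [DAT_reflect]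
  exact ⟨isUnit_of_isBalanced_DAT hm h, isUnit_of_isBalanced_DAT hm hcomm,
    isUnit_of_isBalanced_DAT hm hrefl⟩
end

section
/- Let n be an odd positive integer and let d1, d2 be invertible elements of Z/nZ such that d1 - d2 is also invertible. Then for every positive integer m with m ≡ 0 (mod n) or m ≡ -1 (mod n), the doubly arithmetic triangle DAT(a,d1,d2,m) is balanced in Z/nZ, for every a in Z/nZ. -/
/-!
The multiplicity of `x` in `DAT(a, d1, d2, m)` is the number of lattice points `(i, j)` of the
triangle `i + j < m` with `i • d1 + j • d2 = x - a`. The shift `(i, j) ↦ (i + 1, j)` matches the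
fibre over `v` with the fibre over `v + d1`, except for the first column `i = 0` of the latter and
the top row `i + j = m - 1` of the former. Both are arithmetic progressions of length `m` whose
differences `d2` and `d1 - d2` are units: if `n ∣ m` they hit every residue `m / n` times, and if
`n ∣ m + 1` they are complete systems of residues with one term, `m • d = -d`, removed, and both
removed terms would have landed in the fibres over `v = -d1 - d2`. So the fibre size is `d1`-periodic, hence constant.
-/

open Finset

section Triangle

variable {G : Type*} [AddCommGroup G] [DecidableEq G] (d1 d2 : G) (m : ℕ)

def triangleFiber (v : G) : Finset (ℕ × ℕ) :=
  {p ∈ triangle m | p.1 • d1 + p.2 • d2 = v}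

@[simp]
theorem mem_triangleFiber {v : G} {p : ℕ × ℕ} :
    p ∈ triangleFiber d1 d2 m v ↔ p.1 + p.2 < m ∧ p.1 • d1 + p.2 • d2 = v := by
  simp only [triangleFiber, triangle, mem_filter, mem_product, mem_range]
  constructor
  · rintro ⟨⟨-, hlt⟩, h⟩; exact ⟨hlt, h⟩
  · rintro ⟨hlt, h⟩; exact ⟨⟨⟨by omega, by omega⟩, hlt⟩, h⟩

theorem card_triangleFiber_add_filter_fst_eq_zero (v : G) :
    #{p ∈ triangleFiber d1 d2 m (v + d1) | p.1 = 0} = #{j ∈ range m | j • d2 = v + d1} := by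
  refine card_nbij' Prod.snd (fun j => (0, j)) ?_ ?_ ?_ ?_
  · rintro ⟨i, j⟩ h
    simp only [mem_coe, mem_filter, mem_triangleFiber, mem_range] at h ⊢
    obtain ⟨⟨hlt, h⟩, rfl⟩ := h
    exact ⟨by omega, by simpa using h⟩
  · intro j h
    simp_all
  · rintro ⟨i, j⟩ h
    simp_all
  · intro j _
    rfl

theorem card_triangleFiber_add_filter_fst_ne_zero (v : G) :
    #{p ∈ triangleFiber d1 d2 m (v + d1) | p.1 ≠ 0} =
      #{p ∈ triangleFiber d1 d2 m v | p.1 + p.2 + 1 < m} := by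
  refine card_nbij' (fun p => (p.1 - 1, p.2)) (fun p => (p.1 + 1, p.2)) ?_ ?_ ?_ ?_
  · rintro ⟨i, j⟩ h
    simp only [mem_coe, mem_filter, mem_triangleFiber] at h ⊢
    obtain ⟨⟨hlt, h⟩, hi⟩ := h
    obtain ⟨i, rfl⟩ := Nat.exists_eq_add_one_of_ne_zero hi
    refine ⟨⟨by omega, ?_⟩, by omega⟩
    rw [succ_nsmul, add_right_comm] at h
    simpa using h
  · rintro ⟨i, j⟩ h
    simp only [mem_coe, mem_filter, mem_triangleFiber] at h ⊢
    obtain ⟨⟨-, h⟩, hlt⟩ := h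
    refine ⟨⟨by omega, ?_⟩, by omega⟩
    rw [succ_nsmul, add_right_comm, h]
  · rintro ⟨i, j⟩ h
    simp only [mem_coe, mem_filter] at h
    simp only [Prod.mk.injEq, and_true]
    omega
  · rintro ⟨i, j⟩ _
    simp

theorem card_triangleFiber_filter_top_row (v : G) :
    #{p ∈ triangleFiber d1 d2 m v | ¬ p.1 + p.2 + 1 < m} =
      #{i ∈ range m | i • (d1 - d2) = v - (m - 1) • d2} := by
  refine card_nbij' Prod.fst (fun i => (i, m - 1 - i)) ?_ ?_ ?_ ?_
  · rintro ⟨i, j⟩ h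
    simp only [mem_coe, mem_filter, mem_triangleFiber, mem_range] at h ⊢
    obtain ⟨⟨hlt, h⟩, htop⟩ := h
    obtain rfl : j = m - 1 - i := by omega
    refine ⟨by omega, ?_⟩
    rw [← h, sub_nsmul _ (by omega), nsmul_sub]
    abel
  · intro i h
    simp only [mem_coe, mem_filter, mem_triangleFiber, mem_range] at h ⊢
    obtain ⟨hlt, h⟩ := h
    refine ⟨⟨by omega, ?_⟩, by omega⟩
    rw [sub_nsmul _ (show i ≤ m - 1 by omega), ← eq_sub_iff_add_eq.mp h, nsmul_sub]
    abel
  · rintro ⟨i, j⟩ h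
    simp only [mem_coe, mem_filter, mem_triangleFiber] at h
    simp only [Prod.mk.injEq, true_and]
    omega
  · intro i _
    rfl

theorem card_triangleFiber_shift (v : G) :
    #(triangleFiber d1 d2 m (v + d1)) + #{i ∈ range m | i • (d1 - d2) = v - (m - 1) • d2} =
      #(triangleFiber d1 d2 m v) + #{j ∈ range m | j • d2 = v + d1} := by
  rw [← card_filter_add_card_filter_not (fun p : ℕ × ℕ => p.1 = 0),
    ← card_filter_add_card_filter_not (s := triangleFiber d1 d2 m v)
      (fun p : ℕ × ℕ => p.1 + p.2 + 1 < m),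
    card_triangleFiber_add_filter_fst_eq_zero, card_triangleFiber_add_filter_fst_ne_zero,
    card_triangleFiber_filter_top_row]
  omega

end Triangle

theorem card_filter_range_natCast_eq_of_dvd {n M : ℕ} (h : n ∣ M) (c : ZMod n) :
    #{j ∈ range M | ((j : ℕ) : ZMod n) = c} = M / n := by
  rcases n.eq_zero_or_pos with rfl | hn
  · obtain rfl := zero_dvd_iff.mp h
    simp
  have : NeZero n := ⟨hn.ne'⟩
  have hmod (j : ℕ) : (j : ZMod n) = c ↔ j ≡ c.val [MOD n] := by
    rw [← ZMod.natCast_eq_natCast_iff, ZMod.natCast_zmod_val]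
  simp_rw [hmod, ← Nat.count_eq_card_filter_range, Nat.count_modEq_card _ hn,
    Nat.mod_eq_zero_of_dvd h]
  simp

theorem card_filter_range_nsmul_eq_of_dvd {n M : ℕ} (h : n ∣ M) {u : ZMod n} (hu : IsUnit u)
    (w : ZMod n) : #{j ∈ range M | j • u = w} = M / n := by
  obtain ⟨u, rfl⟩ := hu
  simp_rw [nsmul_eq_mul, ← Units.eq_mul_inv_iff_mul_eq]
  exact card_filter_range_natCast_eq_of_dvd h _

theorem card_filter_range_nsmul_add_ite_of_dvd_add_one {n m : ℕ} (h : n ∣ m + 1) {u : ZMod n}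
    (hu : IsUnit u) (w : ZMod n) :
    #{j ∈ range m | j • u = w} + (if -u = w then 1 else 0) = (m + 1) / n := by
  have hm : m • u = -u := by
    rw [eq_neg_iff_add_eq_zero, ← succ_nsmul, nsmul_eq_mul, (ZMod.natCast_eq_zero_iff _ _).mpr h,
      zero_mul]
  rw [← card_filter_range_nsmul_eq_of_dvd h hu w, card_filter, card_filter, sum_range_succ, hm]

theorem Function.Periodic.apply_eq_of_isUnit {n : ℕ} {β : Type*} {f : ZMod n → β} {u : ZMod n}
    (h : Function.Periodic f u) (hu : IsUnit u) (x y : ZMod n) : f x = f y := by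
  obtain ⟨u, rfl⟩ := hu
  obtain ⟨k, hk⟩ := ZMod.intCast_surjective ((x - y) * ((u⁻¹ : (ZMod n)ˣ) : ZMod n))
  have hx : x = y + k • (u : ZMod n) := by
    rw [zsmul_eq_mul, hk, Units.inv_mul_cancel_right, add_sub_cancel]
  rw [hx, h.zsmul k y]

theorem periodic_card_triangleFiber {n m : ℕ} (hm : n ∣ m ∨ n ∣ m + 1) {d1 d2 : ZMod n}
    (h2 : IsUnit d2) (h12 : IsUnit (d1 - d2)) :
    Function.Periodic (fun v => #(triangleFiber d1 d2 m v)) d1 := by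
  intro v
  have key := card_triangleFiber_shift d1 d2 m v
  suffices #{i ∈ range m | i • (d1 - d2) = v - (m - 1) • d2} =
      #{j ∈ range m | j • d2 = v + d1} by rw [this] at key; exact Nat.add_right_cancel key
  rcases hm with hm | hm
  · rw [card_filter_range_nsmul_eq_of_dvd hm h12, card_filter_range_nsmul_eq_of_dvd hm h2]
  · have top := card_filter_range_nsmul_add_ite_of_dvd_add_one hm h12 (v - (m - 1) • d2)
    have col := card_filter_range_nsmul_add_ite_of_dvd_add_one hm h2 (v + d1)
    have hmissing : -(d1 - d2) = v - (m - 1) • d2 ↔ -d2 = v + d1 := by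
      have hm1 : ((m + 1 : ℕ) : ZMod n) = 0 := (ZMod.natCast_eq_zero_iff _ _).mpr hm
      rcases m with _ | k <;> push_cast at hm1
      · rw [zero_tsub, zero_nsmul, sub_zero]
        constructor <;> intro h
        · linear_combination h - 2 * d2 * hm1
        · linear_combination h + 2 * d2 * hm1
      · rw [Nat.add_sub_cancel, nsmul_eq_mul]
        constructor <;> intro h
        · linear_combination h - d2 * hm1
        · linear_combination h + d2 * hm1
    simp only [hmissing] at top
    omega

theorem count_DAT (n : ℕ) (a d1 d2 : ZMod n) (m : ℕ) (x : ZMod n) :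
    (DAT n a d1 d2 m).count x = #(triangleFiber d1 d2 m (x - a)) := by
  rw [DAT, Multiset.count_map, triangleFiber, card_def, filter_val]
  congr 2
  ext p
  rw [eq_sub_iff_add_eq', add_assoc, eq_comm]

theorem stmt2_general (n : ℕ) (d1 d2 : ZMod n)
    (h1 : IsUnit d1) (h2 : IsUnit d2) (h12 : IsUnit (d1 - d2)) :
    ∀ m : ℕ, 0 < m → (n ∣ m ∨ n ∣ (m + 1)) →
      ∀ a : ZMod n, IsBalanced (DAT n a d1 d2 m) := by
  intro m _ hm a x y
  rw [count_DAT, count_DAT]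
  exact (periodic_card_triangleFiber hm h2 h12).apply_eq_of_isUnit h1 _ _

theorem stmt2 (n : ℕ) (hn : Odd n) (d1 d2 : ZMod n)
    (h1 : IsUnit d1) (h2 : IsUnit d2) (h12 : IsUnit (d1 - d2)) :
    ∀ m : ℕ, 0 < m → (n ∣ m ∨ n ∣ (m + 1)) →
      ∀ a : ZMod n, IsBalanced (DAT n a d1 d2 m) :=
  stmt2_general n d1 d2 h1 h2 h12
end

section
/- For every odd positive integer n, every invertible element d of Z/nZ, every a in Z/nZ, and every positive integer m ≡ 0 or -1 (mod n), the triangles DAT(a,d,-d,m), DAT(a,d,2d,m) and DAT(a,2d,d,m) are balanced in Z/nZ. -/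
open Finset

variable {n : ℕ}

def arithProg (b e : ZMod n) (L : ℕ) : Multiset (ZMod n) :=
  (Multiset.range L).map fun j => b + j • e

lemma arithProg_succ (b e : ZMod n) (L : ℕ) :
    arithProg b e (L + 1) = (b + L • e) ::ₘ arithProg b e L := by
  simp [arithProg, Multiset.range_succ]

lemma arithProg_add (b e : ZMod n) (L L' : ℕ) :
    arithProg b e (L + L') = arithProg b e L + arithProg (b + L • e) e L' := by
  simp only [arithProg, Multiset.range_add, Multiset.map_add, Multiset.map_map]
  congr 1
  refine Multiset.map_congr rfl fun j _ => ?_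
  simp [add_mul, add_assoc]

lemma arithProg_eq_univ [NeZero n] {e : ZMod n} (he : IsUnit e) (b : ZMod n) :
    arithProg b e n = (univ : Finset (ZMod n)).val := by
  have hnd : (arithProg b e n).Nodup := by
    refine (Multiset.nodup_range n).map_on fun i hi j hj hij => ?_
    rw [Multiset.mem_range] at hi hj
    simp only [add_right_inj, nsmul_eq_mul, he.mul_left_inj] at hij
    rwa [ZMod.natCast_eq_natCast_iff', Nat.mod_eq_of_lt hi, Nat.mod_eq_of_lt hj] at hij
  exact congrArg Finset.val (eq_univ_of_card ⟨_, hnd⟩ (by simp [arithProg]))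

lemma arithProg_mul_eq [NeZero n] {e : ZMod n} (he : IsUnit e) (b : ZMod n) (q : ℕ) :
    arithProg b e (q * n) = q • (univ : Finset (ZMod n)).val := by
  induction q with
  | zero => simp [arithProg]
  | succ q ih =>
    have hperiod : (q * n) • e = 0 := by simp [nsmul_eq_mul]
    rw [add_mul, one_mul, arithProg_add, ih, hperiod, add_zero, arithProg_eq_univ he, succ_nsmul]

lemma arithProg_eq_of_add_nsmul_eq [NeZero n] {b b' e e' : ZMod n} (he : IsUnit e)
    (he' : IsUnit e') {L : ℕ} (hL : n ∣ L ∨ n ∣ L + 1) (hb : b + L • e = b' + L • e') :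
    arithProg b e L = arithProg b' e' L := by
  rcases hL with ⟨q, rfl⟩ | ⟨q, hq⟩
  · rw [mul_comm, arithProg_mul_eq he, arithProg_mul_eq he']
  · rw [← Multiset.cons_inj_right (b + L • e)]
    nth_rewrite 2 [hb]
    rw [← arithProg_succ, ← arithProg_succ, hq, mul_comm, arithProg_mul_eq he,
      arithProg_mul_eq he']

lemma isBalanced_of_map_add_eq [NeZero n] {M : Multiset (ZMod n)} {t : ZMod n} (ht : IsUnit t)
    (hM : M.map (· + t) = M) : IsBalanced M := by
  have hstep : ∀ x, M.count (x + t) = M.count x := fun x => by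
    conv_lhs => rw [← hM]
    exact Multiset.count_map_eq_count' _ _ (add_left_injective t) x
  have hiter : ∀ x (k : ℕ), M.count (x + k • t) = M.count x := by
    intro x k
    induction k with
    | zero => simp
    | succ k ih => rw [succ_nsmul, ← add_assoc, hstep, ih]
  intro x y
  obtain ⟨u, rfl⟩ := ht
  have hy : y = x + ((y - x) * ↑u⁻¹).val • (u : ZMod n) := by
    simp [nsmul_eq_mul, ZMod.natCast_val, mul_assoc]
  rw [hy, hiter]

lemma map_add_right_DAT (a t d1 d2 : ZMod n) (m : ℕ) :
    (DAT n a d1 d2 m).map (· + t) = DAT n (a + t) d1 d2 m := by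
  simp only [DAT, Multiset.map_map, Function.comp_def]
  refine Multiset.map_congr rfl fun p _ => ?_
  abel

def triangleIndices (m : ℕ) : Finset (ℕ × ℕ) :=
  (range m ×ˢ range m).filter fun p => p.1 + p.2 < m

@[simp]
lemma mem_triangleIndices {m : ℕ} {p : ℕ × ℕ} : p ∈ triangleIndices m ↔ p.1 + p.2 < m := by
  simp only [triangleIndices, mem_filter, mem_product, mem_range]
  omega

lemma DAT_eq (a d1 d2 : ZMod n) (m : ℕ) :
    DAT n a d1 d2 m = (triangleIndices m).val.map fun p => a + p.1 • d1 + p.2 • d2 :=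
  rfl

lemma DAT_succ (a d1 d2 : ZMod n) (m : ℕ) :
    DAT n a d1 d2 (m + 1) = DAT n a d1 d2 m + arithProg (a + m • d1) (d2 - d1) (m + 1) := by
  have hinj : Function.Injective fun k : ℕ => (m - k, k) := fun _ _ h => congrArg Prod.snd h
  let hyp : ℕ ↪ ℕ × ℕ := ⟨_, hinj⟩
  have hdisj : Disjoint (triangleIndices m) ((range (m + 1)).map hyp) := by
    simp only [disjoint_left, mem_triangleIndices, mem_map, mem_range, hyp,
      Function.Embedding.coeFn_mk, not_exists, not_and, Prod.forall, Prod.mk.injEq]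
    omega
  have hsplit : triangleIndices (m + 1) = (triangleIndices m).disjUnion _ hdisj := by
    ext ⟨i, j⟩
    simp only [mem_triangleIndices, disjUnion_eq_union, mem_union, mem_map, mem_range, hyp,
      Function.Embedding.coeFn_mk, Prod.mk.injEq, exists_eq_right_right]
    omega
  rw [DAT_eq, hsplit, disjUnion_val, Multiset.map_add, map_val, range_val, Multiset.map_map]
  congr 1
  refine Multiset.map_congr rfl fun k hk => ?_
  obtain ⟨l, rfl⟩ := Nat.exists_eq_add_of_le (Nat.lt_succ_iff.1 (Multiset.mem_range.1 hk))
  show a + (k + l - k) • d1 + k • d2 = a + (k + l) • d1 + k • (d2 - d1)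
  rw [add_tsub_cancel_left, add_smul, smul_sub]
  abel

lemma DAT_succ' (a d1 d2 : ZMod n) (m : ℕ) :
    DAT n a d1 d2 (m + 1) = arithProg a d2 (m + 1) + DAT n (a + d1) d1 d2 m := by
  have hinj : Function.Injective fun j : ℕ => (0, j) := fun _ _ h => congrArg Prod.snd h
  have hinj' : Function.Injective fun p : ℕ × ℕ => (p.1 + 1, p.2) := fun p q h => by
    simpa [Prod.ext_iff] using h
  let leg : ℕ ↪ ℕ × ℕ := ⟨_, hinj⟩
  let shift : ℕ × ℕ ↪ ℕ × ℕ := ⟨_, hinj'⟩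
  have hdisj : Disjoint ((range (m + 1)).map leg) ((triangleIndices m).map shift) := by
    simp [disjoint_left, leg, shift]
  have hsplit : triangleIndices (m + 1) = ((range (m + 1)).map leg).disjUnion _ hdisj := by
    ext ⟨i, j⟩
    simp only [mem_triangleIndices, disjUnion_eq_union, mem_union, mem_map, mem_range, leg, shift,
      Function.Embedding.coeFn_mk, Prod.mk.injEq, Prod.exists]
    constructor
    · intro h
      rcases i with _ | i
      · exact Or.inl ⟨j, by omega, rfl, rfl⟩
      · exact Or.inr ⟨i, j, by omega, rfl, rfl⟩
    · rintro (⟨j, hj, rfl, rfl⟩ | ⟨i, j, h, rfl, rfl⟩) <;> omega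
  rw [DAT_eq, hsplit, disjUnion_val, Multiset.map_add, map_val, map_val, range_val,
    Multiset.map_map, Multiset.map_map, DAT_eq, arithProg]
  congr 1
  · refine Multiset.map_congr rfl fun j _ => ?_
    simp [leg]
  · refine Multiset.map_congr rfl fun p _ => ?_
    show a + (p.1 + 1) • d1 + p.2 • d2 = a + d1 + p.1 • d1 + p.2 • d2
    rw [succ_nsmul]
    abel

theorem isBalanced_DAT [NeZero n] {d1 d2 : ZMod n} (hd1 : IsUnit d1) (hd2 : IsUnit d2)
    (hd21 : IsUnit (d2 - d1)) (a : ZMod n) {M : ℕ} (hM : n ∣ M ∨ n ∣ M + 1) :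
    IsBalanced (DAT n a d1 d2 M) := by
  rcases M with _ | m
  · intro x y
    simp [DAT]
  have hsides : arithProg (a + d1 + m • d1) (d2 - d1) (m + 1) = arithProg a d2 (m + 1) := by
    refine arithProg_eq_of_add_nsmul_eq hd21 hd2 hM ?_
    simp only [nsmul_eq_mul]
    push_cast
    ring
  refine isBalanced_of_map_add_eq hd1 ?_
  calc (DAT n a d1 d2 (m + 1)).map (· + d1)
      = DAT n (a + d1) d1 d2 m + arithProg (a + d1 + m • d1) (d2 - d1) (m + 1) := by
        rw [map_add_right_DAT, DAT_succ]
    _ = DAT n a d1 d2 (m + 1) := by rw [hsides, DAT_succ', add_comm]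

theorem stmt3_general (n : ℕ) (hn : Odd n) (d : ZMod n) (hd : IsUnit d) (a : ZMod n)
    (m : ℕ) (hmod : n ∣ m ∨ n ∣ (m + 1)) :
    IsBalanced (DAT n a d (-d) m) ∧ IsBalanced (DAT n a d (2 * d) m) ∧
      IsBalanced (DAT n a (2 * d) d m) := by
  have : NeZero n := ⟨hn.pos.ne'⟩
  have h2d : IsUnit (2 * d) := by
    refine IsUnit.mul ?_ hd
    exact_mod_cast (ZMod.isUnit_iff_coprime 2 n).2 (Nat.coprime_two_left.2 hn)
  refine ⟨isBalanced_DAT hd hd.neg ?_ a hmod, isBalanced_DAT hd h2d ?_ a hmod,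
    isBalanced_DAT h2d hd ?_ a hmod⟩
  · rw [show -d - d = -(2 * d) by ring]
    exact h2d.neg
  · rwa [show 2 * d - d = d by ring]
  · rw [show d - 2 * d = -d by ring]
    exact hd.neg

theorem stmt3 (n : ℕ) (hn : Odd n) (d : ZMod n) (hd : IsUnit d) (a : ZMod n)
    (m : ℕ) (hm : 0 < m) (hmod : n ∣ m ∨ n ∣ (m + 1)) :
    IsBalanced (DAT n a d (-d) m) ∧ IsBalanced (DAT n a d (2 * d) m) ∧
      IsBalanced (DAT n a (2 * d) d m) :=
  stmt3_general n hn d hd a m hmod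
end

section
/- Let ω be a primitive k-th root of unity in C and set λ_l = (1+ω^l)^k - 1 for 0 ≤ l ≤ k-1 (the eigenvalues of the Wendt circulant matrix W_k). Then λ_l = 0 for some l if and only if 6 divides k; consequently the rank of W_k over Q is k if k is not divisible by 6 and k-2 if 6 divides k. -/
/-!
`W_k` is circulant, so it is diagonalised by the Vandermonde matrix of the `k`-th roots of unity,
with eigenvalue `∑_{m<k} C(k,m) z^m = (1 + z)^k - 1` at the root `z`. This vanishes iff
`|z| = |1 + z| = 1`, i.e. iff `z² + z + 1 = 0`: `z` is a primitive cube root of unity, which is a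
`k`-th root only if `3 ∣ k`, and then `(1 + z)^k = (-z²)^k = (-1)^k` forces `k` even. For `6 ∣ k`
both primitive cube roots occur, so two eigenvalues vanish. Finally the rank of a matrix does not
change under a field extension, since both ranks are read off the same rank normal form.
-/

open Finset Matrix

theorem Matrix.rank_map {K L n : Type*} [Field K] [Field L] [Fintype n] [DecidableEq n]
    (f : K →+* L) (M : Matrix n n K) : (M.map f).rank = M.rank := by
  obtain ⟨V, U, e, hV, hU, hVMU⟩ := exists_rank_normal_form M
  obtain ⟨w, hw⟩ : ∃ w : n → K, V * M * U = diagonal w := by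
    rw [hVMU, ← diagonal_one, ← diagonal_zero, fromBlocks_diagonal, submatrix_diagonal_equiv]
    exact ⟨_, rfl⟩
  have hmap : V.map f * M.map f * U.map f = diagonal (f ∘ w) := by
    rw [← Matrix.map_mul, ← Matrix.map_mul, hw, diagonal_map (map_zero f)]; rfl
  have unit_det {A : Matrix n n K} (hA : IsUnit A) : IsUnit (A.map f).det :=
    (isUnit_iff_isUnit_det _).1 (hA.map f.mapMatrix)
  classical
  calc (M.map f).rank = (diagonal (f ∘ w)).rank := by
        rw [← hmap, rank_mul_eq_left_of_isUnit_det _ _ (unit_det hU),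
          rank_mul_eq_right_of_isUnit_det _ _ (unit_det hV)]
    _ = (diagonal w).rank := by simp only [rank_diagonal, Function.comp_apply, map_ne_zero]
    _ = M.rank := by
        rw [← hw, rank_mul_eq_left_of_isUnit_det _ _ ((isUnit_iff_isUnit_det U).1 hU),
          rank_mul_eq_right_of_isUnit_det _ _ ((isUnit_iff_isUnit_det V).1 hV)]

theorem pow_val_sub_mul_pow_val_of_pow_eq_one {M : Type*} [Monoid M] {k : ℕ} {w : M}
    (hw : w ^ k = 1) (a b : Fin k) : w ^ ((a - b : Fin k) : ℕ) * w ^ (b : ℕ) = w ^ (a : ℕ) := by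
  have hab : ((a - b : Fin k) : ℕ) + b ≡ a [MOD k] := by
    rw [Fin.val_sub]
    calc (k - b + a) % k + b ≡ k - b + a + b [MOD k] := Nat.ModEq.add_right _ (Nat.mod_modEq _ _)
      _ = a + k := by omega
      _ ≡ a [MOD k] := Nat.add_modEq_right
  rw [← pow_add, pow_eq_pow_mod _ hw, hab, ← pow_eq_pow_mod _ hw]

theorem Matrix.circulant_mul_vandermonde_inv_transpose {K : Type*} [Field K] {k : ℕ} [NeZero k]
    (v : Fin k → K) {z : Fin k → K} (hz : ∀ l, z l ^ k = 1) :
    circulant v * (vandermonde fun l => (z l)⁻¹)ᵀ =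
      (vandermonde fun l => (z l)⁻¹)ᵀ * diagonal fun l => ∑ m : Fin k, v m * z l ^ (m : ℕ) := by
  ext i l
  have hz0 : z l ≠ 0 := ne_zero_pow l.pos.ne' (by rw [hz l]; exact one_ne_zero)
  have hpow :=
    pow_val_sub_mul_pow_val_of_pow_eq_one (w := (z l)⁻¹) (by rw [inv_pow, hz l, inv_one]) i
  rw [mul_diagonal, mul_apply, mul_sum]
  symm
  refine Fintype.sum_equiv (Equiv.subLeft i) _ _ fun m => ?_
  simp only [circulant_apply, transpose_apply, vandermonde_apply, Equiv.subLeft_apply,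
    sub_sub_cancel, ← hpow m, inv_pow]
  field_simp

theorem IsPrimitiveRoot.rank_circulant {K : Type*} [Field K] {k : ℕ} [NeZero k] {ζ : K}
    (hζ : IsPrimitiveRoot ζ k) (v : Fin k → K) :
    (circulant v).rank =
      Nat.card {l : Fin k // ∑ m : Fin k, v m * (ζ ^ (l : ℕ)) ^ (m : ℕ) ≠ 0} := by
  classical
  set F := (vandermonde fun l : Fin k => (ζ ^ (l : ℕ))⁻¹)ᵀ
  have hF : IsUnit F.det := by
    rw [det_transpose, isUnit_iff_ne_zero, det_vandermonde_ne_zero_iff]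
    exact fun a b hab => Fin.ext (hζ.pow_inj a.isLt b.isLt (inv_injective hab))
  rw [← rank_mul_eq_left_of_isUnit_det F _ hF,
    circulant_mul_vandermonde_inv_transpose v
      fun l => by rw [pow_right_comm, hζ.pow_eq_one, one_pow],
    rank_mul_eq_right_of_isUnit_det _ _ hF, rank_diagonal, Nat.card_eq_fintype_card]

theorem sum_choose_mul_pow_of_pow_eq_one {R : Type*} [CommRing R] {k : ℕ} {z : R}
    (hz : z ^ k = 1) :
    ∑ m : Fin k, (k.choose m : R) * z ^ (m : ℕ) = (1 + z) ^ k - 1 := by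
  rw [Fin.sum_univ_eq_sum_range (fun m => (k.choose m : R) * z ^ m), add_comm, add_pow,
    sum_range_succ]
  simp [hz, mul_comm]

theorem isPrimitiveRoot_three_iff {R : Type*} [CommRing R] [IsDomain R] [NeZero (3 : R)]
    {z : R} :
    IsPrimitiveRoot z 3 ↔ z ^ 2 + z + 1 = 0 := by
  rw [← Polynomial.isRoot_cyclotomic_iff, Polynomial.cyclotomic_prime R 3]
  simp only [sum_range_succ, range_one, sum_singleton, pow_zero, pow_one, Polynomial.IsRoot.def,
    Polynomial.eval_add, Polynomial.eval_one, Polynomial.eval_X, Polynomial.eval_pow]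
  exact ⟨fun h => by linear_combination h, fun h => by linear_combination h⟩

theorem Complex.sq_add_add_one_eq_zero_of_norm_eq_one {z : ℂ} (hz : ‖z‖ = 1) (h : ‖1 + z‖ = 1) :
    z ^ 2 + z + 1 = 0 := by
  have hconj {w : ℂ} (hw : ‖w‖ = 1) : w * (starRingEnd ℂ) w = 1 := by
    rw [mul_conj, normSq_eq_norm_sq, hw]; norm_num
  have e1 := hconj hz
  have e2 := hconj h
  rw [map_add, map_one] at e2
  linear_combination (-1 - z) * e1 + z * e2

theorem Complex.one_add_pow_eq_one_iff {k : ℕ} (hk : k ≠ 0) {z : ℂ} (hz : z ^ k = 1) :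
    (1 + z) ^ k = 1 ↔ 6 ∣ k ∧ IsPrimitiveRoot z 3 := by
  constructor
  · intro h
    have h3 : IsPrimitiveRoot z 3 := isPrimitiveRoot_three_iff.2 <|
      sq_add_add_one_eq_zero_of_norm_eq_one (norm_eq_one_of_pow_eq_one hz hk)
        (norm_eq_one_of_pow_eq_one h hk)
    have h2k : Even k := by
      have hsq : 1 + z = -z ^ 2 := by linear_combination isPrimitiveRoot_three_iff.1 h3
      rw [← neg_one_pow_eq_one_iff_even (by norm_num : (-1 : ℂ) ≠ 1)]
      calc (-1 : ℂ) ^ k = (-1) ^ k * (z ^ k) ^ 2 := by rw [hz, one_pow, mul_one]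
        _ = (1 + z) ^ k := by rw [hsq]; ring
        _ = 1 := h
    exact ⟨Nat.Coprime.mul_dvd_of_dvd_of_dvd (by norm_num) h2k.two_dvd
      (h3.dvd_of_pow_eq_one k hz), h3⟩
  · rintro ⟨⟨t, rfl⟩, h3⟩
    have hsq : 1 + z = -z ^ 2 := by linear_combination isPrimitiveRoot_three_iff.1 h3
    rw [pow_mul, hsq, show (-z ^ 2) ^ 6 = (z ^ 3) ^ 4 by ring, h3.pow_eq_one, one_pow, one_pow]

theorem IsPrimitiveRoot.card_pow_isPrimitiveRoot {R : Type*} [CommRing R] [IsDomain R] {k d : ℕ}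
    [NeZero k] {ζ : R} (hζ : IsPrimitiveRoot ζ k) (hd : d ∣ k) :
    Nat.card {l : Fin k // IsPrimitiveRoot (ζ ^ (l : ℕ)) d} = d.totient := by
  classical
  have hd0 : 0 < d := Nat.pos_of_dvd_of_pos hd (NeZero.pos k)
  have hprim : IsPrimitiveRoot (ζ ^ (k / d)) d := by
    simpa [Nat.div_div_self hd (NeZero.ne k)] using
      hζ.pow_of_dvd (Nat.div_pos (Nat.le_of_dvd (NeZero.pos k) hd) hd0).ne' (Nat.div_dvd_of_dvd hd)
  rw [← hprim.card_primitiveRoots, Nat.card_eq_fintype_card, Fintype.card_subtype]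
  refine card_nbij (fun l : Fin k => ζ ^ (l : ℕ)) (fun l hl => ?_) ?_ fun ξ hξ => ?_
  · exact (mem_primitiveRoots hd0).2 (mem_filter.1 hl).2
  · exact fun a _ b _ hab => Fin.ext (hζ.pow_inj a.isLt b.isLt hab)
  · rw [mem_coe, mem_primitiveRoots hd0] at hξ
    obtain ⟨c, rfl⟩ := hd
    obtain ⟨i, hi, rfl⟩ := hζ.eq_pow_of_pow_eq_one (by rw [pow_mul, hξ.pow_eq_one, one_pow])
    exact ⟨⟨i, hi⟩, by simpa using hξ, rfl⟩

theorem IsPrimitiveRoot.card_one_add_pow_eq_one {k : ℕ} [NeZero k] {ω : ℂ}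
    (hω : IsPrimitiveRoot ω k) :
    Nat.card {l : Fin k // (1 + ω ^ (l : ℕ)) ^ k = 1} = if 6 ∣ k then 2 else 0 := by
  rw [Nat.card_congr (Equiv.subtypeEquivRight fun l : Fin k =>
    Complex.one_add_pow_eq_one_iff (NeZero.ne k) (by rw [pow_right_comm, hω.pow_eq_one, one_pow]))]
  split_ifs with h6
  · simp only [h6, true_and]
    rw [hω.card_pow_isPrimitiveRoot (dvd_trans (by norm_num) h6),
      Nat.totient_prime Nat.prime_three]
  · simp [h6]

theorem stmt6 (k : ℕ) (hk : 0 < k) (ω : ℂ) (hω : IsPrimitiveRoot ω k) :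
    ((∃ l < k, (1 + ω ^ l) ^ k - 1 = 0) ↔ 6 ∣ k) ∧
    (Matrix.circulant (fun i : Fin k => (k.choose i.val : ℚ))).rank =
      if 6 ∣ k then k - 2 else k := by
  have : NeZero k := ⟨hk.ne'⟩
  have hroot (l : ℕ) : (ω ^ l) ^ k = 1 := by rw [pow_right_comm, hω.pow_eq_one, one_pow]
  have hcount := hω.card_one_add_pow_eq_one
  constructor
  · have hexists : Nonempty {l : Fin k // (1 + ω ^ (l : ℕ)) ^ k = 1} ↔
        ∃ l < k, (1 + ω ^ l) ^ k - 1 = 0 := by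
      simp [sub_eq_zero, Fin.exists_iff]
    rw [← hexists, ← Finite.card_pos_iff, hcount]
    split_ifs with h6 <;> simp [h6]
  · classical
    rw [← rank_map (algebraMap ℚ ℂ), map_circulant, hω.rank_circulant]
    simp only [map_natCast, sum_choose_mul_pow_of_pow_eq_one (hroot _), sub_ne_zero]
    rw [Nat.card_eq_fintype_card, Fintype.card_subtype_compl, Fintype.card_fin,
      ← Nat.card_eq_fintype_card, hcount]
    split_ifs <;> rfl
end

section
/- Let k be a positive integer not divisible by 6. Then the determinant of the Wendt matrix W_k = Circ(binom(k,0), binom(k,1), ..., binom(k,k-1)) is nonzero, and det(W_k) = 0 when 6 divides k. -/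
/-!
Diagonalising the circulant by the Fourier (Vandermonde) matrix of a primitive `k`-th root of
unity `ω` gives `det W_k = ∏_ζ ((1 + ζ)^k - 1)` over the `k`-th roots of unity `ζ`. A factor
vanishes iff `1 + ζ` is again a `k`-th root of unity. Then `ζ` and `1 + ζ` both lie on the unit
circle, which forces `ζ` to be a primitive cube root of unity and `1 + ζ = -ζ²` a primitive
sixth root of unity; so some factor vanishes iff `6 ∣ k`.
-/

open Matrix Finset Complex ComplexConjugate

lemma pow_finVal_add {M : Type*} [Monoid M] {k : ℕ} {ω : M} (hω : ω ^ k = 1) (a b : Fin k) :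
    ω ^ ((a + b : Fin k) : ℕ) = ω ^ (a : ℕ) * ω ^ (b : ℕ) := by
  rw [Fin.val_add, ← pow_eq_pow_mod _ hω, pow_add]

theorem IsPrimitiveRoot.det_circulant {R : Type*} [CommRing R] [IsDomain R] {k : ℕ} [NeZero k]
    {ω : R} (hω : IsPrimitiveRoot ω k) (a : Fin k → R) :
    (circulant a).det = ∏ j : Fin k, ∑ t : Fin k, a t * (ω ^ (j : ℕ)) ^ (t : ℕ) := by
  set V := vandermonde fun i : Fin k => ω ^ (i : ℕ)
  have hV : V.det ≠ 0 :=
    det_vandermonde_ne_zero_iff.mpr fun i j h => Fin.ext (hω.pow_inj i.isLt j.isLt h)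
  -- For the transpose the Vandermonde columns are eigenvectors with no `ω⁻¹` in the eigenvalues.
  have hdiag : (circulant a)ᵀ * V =
      V * diagonal fun j : Fin k => ∑ t : Fin k, a t * (ω ^ (j : ℕ)) ^ (t : ℕ) := by
    ext i j
    rw [mul_diagonal, mul_apply, Finset.mul_sum]
    refine (Fintype.sum_equiv (Equiv.addRight i) _ _ fun t => ?_).symm
    simp only [transpose_apply, circulant_apply, Equiv.coe_addRight, add_sub_cancel_right, V,
      vandermonde_apply, pow_finVal_add hω.pow_eq_one]
    ring
  have := congrArg det hdiag
  rw [det_mul, det_mul, det_transpose, det_diagonal, mul_comm] at this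
  exact mul_left_cancel₀ hV this

lemma sum_fin_choose_mul_pow_of_pow_eq_one {R : Type*} [CommRing R] {k : ℕ} {x : R}
    (hx : x ^ k = 1) : ∑ t : Fin k, (k.choose t : R) * x ^ (t : ℕ) = (1 + x) ^ k - 1 := by
  rw [add_comm, add_pow, sum_range_succ,
    Fin.sum_univ_eq_sum_range (fun t => (k.choose t : R) * x ^ t)]
  simp [hx, mul_comm]

def wendtMatrix (R : Type*) [Semiring R] (k : ℕ) : Matrix (Fin k) (Fin k) R :=
  circulant fun i => (k.choose i : R)

theorem IsPrimitiveRoot.det_wendtMatrix {R : Type*} [CommRing R] [IsDomain R] {k : ℕ} [NeZero k]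
    {ω : R} (hω : IsPrimitiveRoot ω k) :
    (wendtMatrix R k).det = ∏ j : Fin k, ((1 + ω ^ (j : ℕ)) ^ k - 1) := by
  rw [wendtMatrix, hω.det_circulant]
  refine prod_congr rfl fun j _ => sum_fin_choose_mul_pow_of_pow_eq_one ?_
  rw [pow_right_comm, hω.pow_eq_one, one_pow]

lemma RingHom.map_det_wendtMatrix {R S : Type*} [CommRing R] [CommRing S] (f : R →+* S)
    (k : ℕ) :
    f (wendtMatrix R k).det = (wendtMatrix S k).det := by
  rw [RingHom.map_det, wendtMatrix, wendtMatrix, RingHom.mapMatrix_apply, map_circulant]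
  simp

theorem Complex.det_wendtMatrix_eq_zero_iff {k : ℕ} (hk : k ≠ 0) :
    (wendtMatrix ℂ k).det = 0 ↔ ∃ z : ℂ, z ^ k = 1 ∧ (1 + z) ^ k = 1 := by
  have : NeZero k := ⟨hk⟩
  obtain ⟨ω, hω⟩ : ∃ ω : ℂ, IsPrimitiveRoot ω k := ⟨_, isPrimitiveRoot_exp k hk⟩
  simp only [hω.det_wendtMatrix, prod_eq_zero_iff, mem_univ, true_and, sub_eq_zero]
  constructor
  · rintro ⟨j, hj⟩
    exact ⟨_, by rw [pow_right_comm, hω.pow_eq_one, one_pow], hj⟩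
  · rintro ⟨z, hz, hz1⟩
    obtain ⟨i, hi, rfl⟩ := hω.eq_pow_of_pow_eq_one hz
    exact ⟨⟨i, hi⟩, hz1⟩

lemma Complex.sq_add_self_add_one_eq_zero_of_norm_eq_one {z : ℂ} (hz : ‖z‖ = 1)
    (hz1 : ‖1 + z‖ = 1) : z ^ 2 + z + 1 = 0 := by
  have hre : 2 * z.re + 1 = 0 := by
    have h := normSq_add 1 z
    simp only [← Complex.sq_norm, hz, hz1, one_pow, norm_one, one_mul, conj_re] at h
    linarith
  have hconj : z * conj z = 1 := by
    rw [mul_conj, normSq_eq_norm_sq, hz]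
    simp
  have hadd : z + conj z = 2 * (z.re : ℂ) := by
    rw [add_conj]
    push_cast
    ring
  calc z ^ 2 + z + 1 = z * ((2 * z.re + 1 : ℝ) : ℂ) := by
        push_cast
        linear_combination (-1 : ℂ) * hconj + z * hadd
    _ = 0 := by rw [hre]; simp

lemma isPrimitiveRoot_one_add_of_sq_add_self_add_one_eq_zero {R : Type*} [CommRing R]
    [CharZero R] {z : R} (hz : z ^ 2 + z + 1 = 0) : IsPrimitiveRoot (1 + z) 6 := by
  have hcube : (1 + z) ^ 3 = -1 := by linear_combination (2 + z) * hz
  refine (IsPrimitiveRoot.iff (by norm_num)).mpr ⟨?_, fun l hl hl6 h => ?_⟩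
  · linear_combination ((1 + z) ^ 3 - 1) * hcube
  -- `(1 + z) ^ l` is `1 + z, z, -1, -(1 + z), -z` for `l = 1, …, 5`, and none of these is `1`.
  interval_cases l
  · have : (1 : R) = 0 := by linear_combination hz - (1 + z) * h
    exact one_ne_zero this
  · have : (3 : R) = 0 := by linear_combination (z + 3) * hz - (z + 2) * h
    norm_num at this
  · have : (2 : R) = 0 := by linear_combination (z + 2) * hz - h
    norm_num at this
  · have : (3 : R) = 0 := by
      linear_combination (1 - (z - 1) * (z + 1) * (z + 2)) * hz + (z - 1) * h
    norm_num at this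
  · have : (1 : R) = 0 := by
      linear_combination ((1 + z) - z * (1 + z) ^ 2 * (2 + z)) * hz + z * h
    exact one_ne_zero this

theorem Complex.exists_pow_eq_one_and_one_add_pow_eq_one_iff {k : ℕ} (hk : k ≠ 0) :
    (∃ z : ℂ, z ^ k = 1 ∧ (1 + z) ^ k = 1) ↔ 6 ∣ k := by
  constructor
  · rintro ⟨z, hz, hz1⟩
    have hq := sq_add_self_add_one_eq_zero_of_norm_eq_one
      (norm_eq_one_of_pow_eq_one hz hk) (norm_eq_one_of_pow_eq_one hz1 hk)
    exact (isPrimitiveRoot_one_add_of_sq_add_self_add_one_eq_zero hq).dvd_of_pow_eq_one k hz1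
  · intro h6
    obtain ⟨ζ, hζ⟩ : ∃ ζ : ℂ, IsPrimitiveRoot ζ 3 :=
      ⟨_, isPrimitiveRoot_exp 3 three_ne_zero⟩
    have hq : ζ ^ 2 + ζ + 1 = 0 := by
      have := hζ.geom_sum_eq_zero (by norm_num)
      simp only [sum_range_succ, sum_range_zero] at this
      linear_combination this
    exact ⟨ζ, (hζ.pow_eq_one_iff_dvd k).mpr (dvd_trans (by norm_num) h6),
      ((isPrimitiveRoot_one_add_of_sq_add_self_add_one_eq_zero hq).pow_eq_one_iff_dvd k).mpr h6⟩

theorem stmt7 (k : ℕ) (hk : 0 < k) :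
    (¬ (6 ∣ k) → (Matrix.circulant (fun i : Fin k => (k.choose i.val : ℚ))).det ≠ 0) ∧
    (6 ∣ k → (Matrix.circulant (fun i : Fin k => (k.choose i.val : ℚ))).det = 0) := by
  have key : (wendtMatrix ℚ k).det = 0 ↔ 6 ∣ k := by
    rw [← Complex.exists_pow_eq_one_and_one_add_pow_eq_one_iff hk.ne',
      ← Complex.det_wendtMatrix_eq_zero_iff hk.ne', ← (Rat.castHom ℂ).map_det_wendtMatrix,
      map_eq_zero]
  exact ⟨mt key.mp, key.mpr⟩
end

section
/- Let a_0, a_1, a_2, d be integers and Σ = a_0 + a_1 + a_2. Consider the 3-interlaced arithmetic progression S = IAP((a_0,a_1,a_2),(d, -2d-3Σ, d+3Σ)) of integers, and its orbit a_{i,j} with a_{0,j} = S_j and a_{i+1,j} = a_{i,j} + a_{i,j+1}. Then the orbit is (6,3)-interlaced doubly arithmetic; in particular a_{6i,3j} = a_0 - 2i(d+3Σ) + jd, a_{6i,3j+1} = a_1 - 2id - j(2d+3Σ), and a_{6i,3j+2} = a_2 + 2i(2d+3Σ) + j(d+3Σ) for all i ≥ 0 and j ∈ Z. -/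
def IAP3 {G : Type*} [AddCommGroup G] (a0 a1 a2 d0 d1 d2 : G) : ℤ → G :=
  fun j => if j % 3 = 0 then a0 + (j / 3) • d0
    else if j % 3 = 1 then a1 + (j / 3) • d1
    else a2 + (j / 3) • d2

def orbit {G : Type*} [AddCommGroup G] (S : ℤ → G) : ℕ → ℤ → G
  | 0 => S
  | i+1 => fun j => orbit S i j + orbit S i (j+1)

lemma orbit_add {G : Type*} [AddCommGroup G] (S : ℤ → G) (m i : ℕ) :
    orbit S (m + i) = orbit (orbit S m) i := by
  induction i with
  | zero => rfl
  | succ i ih => funext j; show orbit S (m+i) j + orbit S (m+i) (j+1) = _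
                 rw [ih]; rfl

lemma IAP3_congr {a0 a1 a2 d0 d1 d2 b0 b1 b2 e0 e1 e2 : ℤ}
    (h0 : a0 = b0) (h1 : a1 = b1) (h2 : a2 = b2)
    (h3 : d0 = e0) (h4 : d1 = e1) (h5 : d2 = e2) :
    IAP3 a0 a1 a2 d0 d1 d2 = IAP3 b0 b1 b2 e0 e1 e2 := by subst_vars; rfl

lemma step1 (a0 a1 a2 d0 d1 d2 : ℤ) :
    orbit (IAP3 a0 a1 a2 d0 d1 d2) 1 =
      IAP3 (a0+a1) (a1+a2) (a2+a0+d0) (d0+d1) (d1+d2) (d2+d0) := by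
  funext j
  show IAP3 a0 a1 a2 d0 d1 d2 j + IAP3 a0 a1 a2 d0 d1 d2 (j+1) = _
  unfold IAP3
  rcases (show j % 3 = 0 ∨ j % 3 = 1 ∨ j % 3 = 2 by omega) with h | h | h
  · have h1 : (j+1) % 3 = 1 := by omega
    have h2 : (j+1) / 3 = j / 3 := by omega
    simp [h, h1, h2]; ring
  · have h1 : (j+1) % 3 = 2 := by omega
    have h2 : (j+1) / 3 = j / 3 := by omega
    simp [h, h1, h2]; ring
  · have h1 : (j+1) % 3 = 0 := by omega
    have h2 : (j+1) / 3 = j / 3 + 1 := by omega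
    simp [h, h1, h2]; ring

lemma stepS (a0 a1 a2 d0 d1 d2 : ℤ) (n : ℕ) :
    orbit (IAP3 a0 a1 a2 d0 d1 d2) (n+1) =
      orbit (IAP3 (a0+a1) (a1+a2) (a2+a0+d0) (d0+d1) (d1+d2) (d2+d0)) n := by
  rw [Nat.add_comm, orbit_add, step1]

lemma IAP3_eval0 (a0 a1 a2 d0 d1 d2 m : ℤ) :
    IAP3 a0 a1 a2 d0 d1 d2 (3*m) = a0 + m * d0 := by
  unfold IAP3
  have h : (3*m) % 3 = 0 := by omega
  have h2 : (3*m) / 3 = m := by omega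
  simp [h, h2]

lemma IAP3_eval1 (a0 a1 a2 d0 d1 d2 m : ℤ) :
    IAP3 a0 a1 a2 d0 d1 d2 (3*m+1) = a1 + m * d1 := by
  unfold IAP3
  have h : (3*m+1) % 3 = 1 := by omega
  have h2 : (3*m+1) / 3 = m := by omega
  simp [h, h2]

lemma IAP3_eval2 (a0 a1 a2 d0 d1 d2 m : ℤ) :
    IAP3 a0 a1 a2 d0 d1 d2 (3*m+2) = a2 + m * d2 := by
  unfold IAP3
  have h : (3*m+2) % 3 = 2 := by omega
  have h2 : (3*m+2) / 3 = m := by omega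
  simp [h, h2]

lemma master (a0 a1 a2 d : ℤ) (i : ℕ) :
    orbit (IAP3 a0 a1 a2 d (-(2*d) - 3*(a0+a1+a2)) (d + 3*(a0+a1+a2))) (6*i) =
      IAP3 (a0 - 2*i*(d+3*(a0+a1+a2))) (a1 - 2*i*d) (a2 + 2*i*(2*d+3*(a0+a1+a2)))
        d (-(2*d) - 3*(a0+a1+a2)) (d + 3*(a0+a1+a2)) := by
  induction i with
  | zero =>
      show IAP3 _ _ _ _ _ _ = _
      apply IAP3_congr <;> push_cast <;> ring
  | succ i ih =>
      rw [show 6*(i+1) = 6*i + 6 by ring, orbit_add, ih]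
      rw [show (6:ℕ) = 5+1 from rfl, stepS,
          show (5:ℕ) = 4+1 from rfl, stepS,
          show (4:ℕ) = 3+1 from rfl, stepS,
          show (3:ℕ) = 2+1 from rfl, stepS,
          show (2:ℕ) = 1+1 from rfl, stepS,
          step1]
      apply IAP3_congr <;> push_cast <;> ring

lemma keyFun (a0 a1 a2 d : ℤ) (i0 : ℕ) (h : i0 < 6) :
    ∃ A0 B0 A1 B1 A2 B2 D0 D1 D2 : ℤ, ∀ i : ℕ,
      orbit (IAP3 a0 a1 a2 d (-(2*d) - 3*(a0+a1+a2)) (d + 3*(a0+a1+a2))) (i0 + 6*i) =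
        IAP3 (A0 + (i:ℤ)*B0) (A1 + (i:ℤ)*B1) (A2 + (i:ℤ)*B2) D0 D1 D2 := by
  interval_cases i0
  · refine ⟨(a0), ((-6)*a0 + (-6)*a1 + (-6)*a2 + (-2)*d), (a1), ((-2)*d), (a2), ((6)*a0 + (6)*a1 + (6)*a2 + (4)*d), (d), ((-3)*a0 + (-3)*a1 + (-3)*a2 + (-2)*d), ((3)*a0 + (3)*a1 + (3)*a2 + d), fun i => ?_⟩
    rw [Nat.zero_add, master]
    apply IAP3_congr <;> push_cast <;> ring
  · refine ⟨(a0 + a1), ((-6)*a0 + (-6)*a1 + (-6)*a2 + (-4)*d), (a1 + a2), ((6)*a0 + (6)*a1 + (6)*a2 + (2)*d), (a0 + a2 + d), ((2)*d), ((-3)*a0 + (-3)*a1 + (-3)*a2 + (-1)*d), ((-1)*d), ((3)*a0 + (3)*a1 + (3)*a2 + (2)*d), fun i => ?_⟩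
    rw [Nat.add_comm, orbit_add, master]
    rw [step1]
    apply IAP3_congr <;> push_cast <;> ring
  · refine ⟨(a0 + (2)*a1 + a2), ((-2)*d), (a0 + a1 + (2)*a2 + d), ((6)*a0 + (6)*a1 + (6)*a2 + (4)*d), ((-1)*a0 + (-2)*a1 + (-2)*a2), ((-6)*a0 + (-6)*a1 + (-6)*a2 + (-2)*d), ((-3)*a0 + (-3)*a1 + (-3)*a2 + (-2)*d), ((3)*a0 + (3)*a1 + (3)*a2 + d), (d), fun i => ?_⟩
    rw [Nat.add_comm, orbit_add, master]
    rw [show (2:ℕ) = 1+1 by norm_num, stepS,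
        step1]
    apply IAP3_congr <;> push_cast <;> ring
  · refine ⟨((2)*a0 + (3)*a1 + (3)*a2 + d), ((6)*a0 + (6)*a1 + (6)*a2 + (2)*d), ((-1)*a1 + d), ((2)*d), ((-3)*a0 + (-3)*a1 + (-4)*a2 + (-2)*d), ((-6)*a0 + (-6)*a1 + (-6)*a2 + (-4)*d), ((-1)*d), ((3)*a0 + (3)*a1 + (3)*a2 + (2)*d), ((-3)*a0 + (-3)*a1 + (-3)*a2 + (-1)*d), fun i => ?_⟩
    rw [Nat.add_comm, orbit_add, master]
    rw [show (3:ℕ) = 2+1 by norm_num, stepS,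
        show (2:ℕ) = 1+1 by norm_num, stepS,
        step1]
    apply IAP3_congr <;> push_cast <;> ring
  · refine ⟨((2)*a0 + (2)*a1 + (3)*a2 + (2)*d), ((6)*a0 + (6)*a1 + (6)*a2 + (4)*d), ((-3)*a0 + (-4)*a1 + (-4)*a2 + (-1)*d), ((-6)*a0 + (-6)*a1 + (-6)*a2 + (-2)*d), ((-1)*a0 + (-1)*a2 + (-2)*d), ((-2)*d), ((3)*a0 + (3)*a1 + (3)*a2 + d), (d), ((-3)*a0 + (-3)*a1 + (-3)*a2 + (-2)*d), fun i => ?_⟩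
    rw [Nat.add_comm, orbit_add, master]
    rw [show (4:ℕ) = 3+1 by norm_num, stepS,
        show (3:ℕ) = 2+1 by norm_num, stepS,
        show (2:ℕ) = 1+1 by norm_num, stepS,
        step1]
    apply IAP3_congr <;> push_cast <;> ring
  · refine ⟨((-1)*a0 + (-2)*a1 + (-1)*a2 + d), ((2)*d), ((-4)*a0 + (-4)*a1 + (-5)*a2 + (-3)*d), ((-6)*a0 + (-6)*a1 + (-6)*a2 + (-4)*d), ((4)*a0 + (5)*a1 + (5)*a2 + d), ((6)*a0 + (6)*a1 + (6)*a2 + (2)*d), ((3)*a0 + (3)*a1 + (3)*a2 + (2)*d), ((-3)*a0 + (-3)*a1 + (-3)*a2 + (-1)*d), ((-1)*d), fun i => ?_⟩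
    rw [Nat.add_comm, orbit_add, master]
    rw [show (5:ℕ) = 4+1 by norm_num, stepS,
        show (4:ℕ) = 3+1 by norm_num, stepS,
        show (3:ℕ) = 2+1 by norm_num, stepS,
        show (2:ℕ) = 1+1 by norm_num, stepS,
        step1]
    apply IAP3_congr <;> push_cast <;> ring

lemma key (a0 a1 a2 d : ℤ) (i0 : ℕ) (h : i0 < 6) (j0 : ℤ) :
    ∃ A B D : ℤ, ∀ (i : ℕ) (j : ℤ),
      orbit (IAP3 a0 a1 a2 d (-(2*d) - 3*(a0+a1+a2)) (d + 3*(a0+a1+a2))) (i0 + 6*i)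
        (j0 + 3*j) = A + (i:ℤ)*B + j*D := by
  obtain ⟨A0, B0, A1, B1, A2, B2, D0, D1, D2, hk⟩ := keyFun a0 a1 a2 d i0 h
  rcases (show j0 % 3 = 0 ∨ j0 % 3 = 1 ∨ j0 % 3 = 2 by omega) with hr | hr | hr
  · refine ⟨A0 + (j0/3)*D0, B0, D0, fun i j => ?_⟩
    rw [hk i, show j0 + 3*j = 3*(j0/3 + j) by omega, IAP3_eval0]; ring
  · refine ⟨A1 + (j0/3)*D1, B1, D1, fun i j => ?_⟩
    rw [hk i, show j0 + 3*j = 3*(j0/3 + j) + 1 by omega, IAP3_eval1]; ring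
  · refine ⟨A2 + (j0/3)*D2, B2, D2, fun i j => ?_⟩
    rw [hk i, show j0 + 3*j = 3*(j0/3 + j) + 2 by omega, IAP3_eval2]; ring

theorem stmt8 (a0 a1 a2 d : ℤ) (S : ℤ → ℤ)
    (hS : S = IAP3 a0 a1 a2 d (-(2 * d) - 3 * (a0 + a1 + a2)) (d + 3 * (a0 + a1 + a2))) :
    (∀ i0 < 6, ∀ j0 < 3, ∀ (i : ℕ) (j : ℤ),
      orbit S (i0 + 6 * i) ((j0 : ℤ) + 3 * j) =
        orbit S i0 (j0 : ℤ)
          + (i : ℤ) * (orbit S (i0 + 6) (j0 : ℤ) - orbit S i0 (j0 : ℤ))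
          + j * (orbit S i0 ((j0 : ℤ) + 3) - orbit S i0 (j0 : ℤ))) ∧
    (∀ (i : ℕ) (j : ℤ),
      orbit S (6 * i) (3 * j) = a0 - 2 * (i : ℤ) * (d + 3 * (a0 + a1 + a2)) + j * d) ∧
    (∀ (i : ℕ) (j : ℤ),
      orbit S (6 * i) (3 * j + 1) = a1 - 2 * (i : ℤ) * d - j * (2 * d + 3 * (a0 + a1 + a2))) ∧
    (∀ (i : ℕ) (j : ℤ),
      orbit S (6 * i) (3 * j + 2) =
        a2 + 2 * (i : ℤ) * (2 * d + 3 * (a0 + a1 + a2)) + j * (d + 3 * (a0 + a1 + a2))) := by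
  subst hS
  refine ⟨?_, ?_, ?_, ?_⟩
  · intro i0 hi0 j0 hj0 i j
    obtain ⟨A, B, D, hk⟩ := key a0 a1 a2 d i0 hi0 j0
    have h00 := hk 0 0
    have h10 := hk 1 0
    have h01 := hk 0 1
    norm_num at h00 h10 h01
    rw [hk i j, h00, h10, h01]; ring
  · intro i j
    rw [master, IAP3_eval0]; try push_cast; try ring
  · intro i j
    rw [master, IAP3_eval1]; try push_cast; try ring
  · intro i j
    rw [master, IAP3_eval2]; try push_cast; try ring
end

section
/- Let n be an odd positive integer, a_0, a_1, a_2, d ∈ Z/nZ, Σ = a_0+a_1+a_2, and m a positive multiple of 3n. The finite subsequence consisting of the first m terms of IAP((a_0,a_1,a_2),(d, -2d-3Σ, d+3Σ)) in Z/nZ is antisymmetric if and only if Σ = 0 and a_1 = -d. -/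
lemma IAP3_eq0 {G : Type*} [AddCommGroup G] (a0 a1 a2 d0 d1 d2 : G) (q : ℤ) :
    IAP3 a0 a1 a2 d0 d1 d2 (3 * q) = a0 + q • d0 := by
  simp only [IAP3]
  rw [if_pos (by omega : (3 * q) % 3 = 0), show 3 * q / 3 = q by omega]

lemma IAP3_eq1 {G : Type*} [AddCommGroup G] (a0 a1 a2 d0 d1 d2 : G) (q : ℤ) :
    IAP3 a0 a1 a2 d0 d1 d2 (3 * q + 1) = a1 + q • d1 := by
  simp only [IAP3]
  rw [if_neg (by omega : ¬ (3 * q + 1) % 3 = 0), if_pos (by omega : (3 * q + 1) % 3 = 1),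
    show (3 * q + 1) / 3 = q by omega]

lemma IAP3_eq2 {G : Type*} [AddCommGroup G] (a0 a1 a2 d0 d1 d2 : G) (q : ℤ) :
    IAP3 a0 a1 a2 d0 d1 d2 (3 * q + 2) = a2 + q • d2 := by
  simp only [IAP3]
  rw [if_neg (by omega : ¬ (3 * q + 2) % 3 = 0), if_neg (by omega : ¬ (3 * q + 2) % 3 = 1),
    show (3 * q + 2) / 3 = q by omega]

theorem stmt11 (n : ℕ) (hn : Odd n) (a0 a1 a2 d : ZMod n) (m : ℕ) (hm : 0 < m)
    (hdvd : 3 * n ∣ m) :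
    (∀ j : ℕ, j < m →
        IAP3 a0 a1 a2 d (-(2 * d) - 3 * (a0 + a1 + a2)) (d + 3 * (a0 + a1 + a2))
            ((m : ℤ) - 1 - j)
          = - IAP3 a0 a1 a2 d (-(2 * d) - 3 * (a0 + a1 + a2)) (d + 3 * (a0 + a1 + a2)) (j : ℤ))
      ↔ (a0 + a1 + a2 = 0 ∧ a1 = -d) := by
  obtain ⟨t, ht⟩ := hdvd
  set K : ℕ := n * t with hKdef
  have hmK' : m = 3 * K := by rw [ht, hKdef]; ring
  have hmK : (m : ℤ) = 3 * (K : ℤ) := by exact_mod_cast congrArg (Nat.cast : ℕ → ℤ) hmK'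
  have hK1 : 1 ≤ K := by omega
  have hK0 : ((K : ℕ) : ZMod n) = 0 := by
    rw [hKdef]; push_cast; simp [ZMod.natCast_self]
  obtain ⟨s, hs⟩ := hn
  have h2inv : (2 : ZMod n) * ((s : ZMod n) + 1) = 1 := by
    have h' : ((2 * (s + 1) : ℕ) : ZMod n) = ((n + 1 : ℕ) : ZMod n) := by
      rw [show 2 * (s + 1) = n + 1 by omega]
    push_cast at h'
    simpa [ZMod.natCast_self] using h'
  have htwo : ∀ x : ZMod n, 2 * x = 0 → x = 0 := by
    intro x hx
    calc x = ((2 : ZMod n) * ((s : ZMod n) + 1)) * x := by rw [h2inv, one_mul]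
    _ = ((s : ZMod n) + 1) * (2 * x) := by ring
    _ = 0 := by rw [hx, mul_zero]
  constructor
  · intro h
    have e0 := h 0 (by omega)
    have e1 := h 1 (by omega)
    have e2 := h 2 (by omega)
    rw [show ((m : ℤ) - 1 - ((0 : ℕ) : ℤ)) = 3 * ((K : ℤ) - 1) + 2 by omega, IAP3_eq2,
      show ((0 : ℕ) : ℤ) = 3 * 0 by norm_num, IAP3_eq0] at e0
    rw [show ((m : ℤ) - 1 - ((1 : ℕ) : ℤ)) = 3 * ((K : ℤ) - 1) + 1 by omega, IAP3_eq1,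
      show ((1 : ℕ) : ℤ) = 3 * 0 + 1 by norm_num, IAP3_eq1] at e1
    rw [show ((m : ℤ) - 1 - ((2 : ℕ) : ℤ)) = 3 * ((K : ℤ) - 1) by omega, IAP3_eq0,
      show ((2 : ℕ) : ℤ) = 3 * 0 + 2 by norm_num, IAP3_eq2] at e2
    push_cast [zsmul_eq_mul] at e0 e1 e2
    rw [hK0] at e0 e1 e2
    have hS3 : 3 * (a0 + a1 + a2) = 0 := by linear_combination e2 - e0
    have ha1' : 2 * (a1 + d) = 0 := by linear_combination e1 - hS3
    have ha1 : a1 = -d := by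
      linear_combination htwo (a1 + d) ha1'
    refine ⟨?_, ha1⟩
    linear_combination e2 + htwo (a1 + d) ha1'
  · rintro ⟨hS, ha1⟩ j hj
    obtain ⟨q, hq⟩ : ∃ q : ℤ, (j : ℤ) = 3 * q ∨ (j : ℤ) = 3 * q + 1 ∨ (j : ℤ) = 3 * q + 2 :=
      ⟨(j : ℤ) / 3, by omega⟩
    rcases hq with hq | hq | hq
    · rw [show ((m : ℤ) - 1 - (j : ℤ)) = 3 * ((K : ℤ) - 1 - q) + 2 by omega, IAP3_eq2,
        hq, IAP3_eq0]
      push_cast [zsmul_eq_mul]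
      rw [hK0]
      linear_combination (-2 - 3 * (q : ZMod n)) * hS - ha1
    · rw [show ((m : ℤ) - 1 - (j : ℤ)) = 3 * ((K : ℤ) - 1 - q) + 1 by omega, IAP3_eq1,
        hq, IAP3_eq1]
      push_cast [zsmul_eq_mul]
      rw [hK0]
      linear_combination 2 * ha1 + 3 * hS
    · rw [show ((m : ℤ) - 1 - (j : ℤ)) = 3 * ((K : ℤ) - 1 - q)  by omega, IAP3_eq0,
        hq, IAP3_eq2]
      push_cast [zsmul_eq_mul]
      rw [hK0]
      linear_combination (1 + 3 * (q : ZMod n)) * hS - ha1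
end

section
/- Let n be an odd number, d invertible in Z/nZ, and consider the orbit a_{i,j} (i ≥ 0, j ∈ Z) of the universal sequence S = IAP((0,-d,d),(d,-2d,d)) in Z/nZ under the rule a_{i+1,j} = a_{i,j} + a_{i,j+1}. Then for all non-negative integers i and j: a_{i,j} = (-1)^i · Σ_{k>0} binom(k, j+2i-k) · (-1)^k · (k-i) · d. -/
section IAP3

variable {G : Type*} [AddCommGroup G] (a0 a1 a2 d0 d1 d2 : G) (t : ℤ)

theorem IAP3_three_mul : IAP3 a0 a1 a2 d0 d1 d2 (3 * t) = a0 + t • d0 := by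
  simp [IAP3]

theorem IAP3_three_mul_add_one : IAP3 a0 a1 a2 d0 d1 d2 (3 * t + 1) = a1 + t • d1 := by
  have hdiv : (3 * t + 1) / 3 = t := by omega
  simp [IAP3, hdiv]

theorem IAP3_three_mul_add_two : IAP3 a0 a1 a2 d0 d1 d2 (3 * t + 2) = a2 + t • d2 := by
  have hdiv : (3 * t + 2) / 3 = t := by omega
  simp [IAP3, hdiv]

end IAP3

open Finset

section DiagChooseSum

variable {R : Type*} [CommRing R]

-- `∑ k, C(k, m - k) * f k`, indexed so that no truncated subtraction occurs.
def diagChooseSum (f : ℕ → R) (m : ℕ) : R :=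
  ∑ p ∈ antidiagonal m, (p.1.choose p.2 : R) * f p.1

theorem diagChooseSum_add_two (f : ℕ → R) (m : ℕ) :
    diagChooseSum f (m + 2) =
      diagChooseSum (fun k => f (k + 1)) (m + 1) + diagChooseSum (fun k => f (k + 1)) m := by
  simp only [diagChooseSum]
  rw [Nat.antidiagonal_succ_succ', Nat.antidiagonal_succ']
  simp only [sum_cons, sum_map, Function.Embedding.coe_prodMap, Function.Embedding.coeFn_mk,
    Prod.map_fst, Prod.map_snd, Nat.succ_eq_add_one, Nat.choose_succ_succ, Nat.cast_add, add_mul,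
    sum_add_distrib, Nat.choose_zero_succ, Nat.choose_zero_right, Function.Embedding.refl_apply]
  push_cast
  ring

def altAffine (c : R) (k : ℕ) : R := (-1) ^ k * (k - c)

theorem altAffine_succ (c : R) (k : ℕ) : altAffine c (k + 1) = -altAffine (c - 1) k := by
  simp only [altAffine]; push_cast; ring

theorem diagChooseSum_neg (f : ℕ → R) (m : ℕ) :
    diagChooseSum (fun k => -f k) m = -diagChooseSum f m := by
  simp [diagChooseSum]

theorem diagChooseSum_altAffine_add_two (c : R) (m : ℕ) :
    diagChooseSum (altAffine c) (m + 2) =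
      -(diagChooseSum (altAffine (c - 1)) (m + 1) + diagChooseSum (altAffine (c - 1)) m) := by
  simp only [diagChooseSum_add_two, altAffine_succ, diagChooseSum_neg]
  ring

theorem diagChooseSum_altAffine_mod_three (t : ℕ) (c : R) :
    diagChooseSum (altAffine c) (3 * t) = t - c ∧
      diagChooseSum (altAffine c) (3 * t + 1) = c - (2 * t + 1) ∧
      diagChooseSum (altAffine c) (3 * t + 2) = t + 1 := by
  induction t generalizing c with
  | zero =>
    have h0 : ∀ c : R, diagChooseSum (altAffine c) 0 = -c := fun c => by
      simp [diagChooseSum, altAffine]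
    have h1 : ∀ c : R, diagChooseSum (altAffine c) 1 = c - 1 := fun c => by
      simp [diagChooseSum, altAffine, Nat.antidiagonal_succ]
    refine ⟨by simp [h0], by simp [h1], ?_⟩
    rw [diagChooseSum_altAffine_add_two, h0, h1]
    simp
  | succ t ih =>
    have h3 : ∀ c : R, diagChooseSum (altAffine c) (3 * t + 3) = t + 1 - c := fun c => by
      rw [diagChooseSum_altAffine_add_two, (ih _).2.2, (ih _).2.1]; ring
    have h4 : ∀ c : R, diagChooseSum (altAffine c) (3 * t + 4) = c - (2 * t + 3) := fun c => by
      rw [diagChooseSum_altAffine_add_two, h3, (ih _).2.2]; ring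
    have h5 : diagChooseSum (altAffine c) (3 * t + 5) = t + 2 := by
      rw [diagChooseSum_altAffine_add_two, h4, h3]; ring
    refine ⟨?_, ?_, ?_⟩
    · rw [show 3 * (t + 1) = 3 * t + 3 by ring, h3]; push_cast; ring
    · rw [show 3 * (t + 1) + 1 = 3 * t + 4 by ring, h4]; push_cast; ring
    · rw [show 3 * (t + 1) + 2 = 3 * t + 5 by ring, h5]; push_cast; ring

theorem diagChooseSum_eq_sum_Icc (f : ℕ → R) {m : ℕ} (h : f 0 = 0 ∨ 0 < m) :
    diagChooseSum f m = ∑ k ∈ Icc 1 m, (k.choose (m - k) : R) * f k := by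
  have hzero : ((0 : ℕ).choose m : R) * f 0 = 0 := by
    rcases h with h | h
    · rw [h, mul_zero]
    · rw [Nat.choose_eq_zero_of_lt h, Nat.cast_zero, zero_mul]
  rw [diagChooseSum, Nat.sum_antidiagonal_eq_sum_range_succ_mk, sum_range_eq_add_Ico _ m.succ_pos,
    Nat.sub_zero, hzero, zero_add, Nat.succ_eq_add_one, Ico_add_one_right_eq_Icc]

end DiagChooseSum

section Orbit

variable {R : Type*} [CommRing R]

theorem IAP3_eq_diagChooseSum_altAffine (d : R) (j : ℕ) :
    IAP3 (0 : R) (-d) d d (-(2 * d)) d j = diagChooseSum (altAffine 0) j * d := by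
  obtain ⟨t, r, hr, rfl⟩ : ∃ t r, r < 3 ∧ j = 3 * t + r :=
    ⟨j / 3, j % 3, j.mod_lt three_pos, by omega⟩
  have hclosed := diagChooseSum_altAffine_mod_three t (0 : R)
  interval_cases r
  · rw [add_zero, Nat.cast_mul, Nat.cast_ofNat, IAP3_three_mul, hclosed.1]
    simp
  · rw [Nat.cast_add, Nat.cast_mul, Nat.cast_ofNat, Nat.cast_one, IAP3_three_mul_add_one,
      hclosed.2.1]
    simp only [natCast_zsmul, nsmul_eq_mul]
    ring
  · rw [Nat.cast_add, Nat.cast_mul, Nat.cast_ofNat, Nat.cast_ofNat, IAP3_three_mul_add_two,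
      hclosed.2.2]
    simp only [natCast_zsmul, nsmul_eq_mul]
    ring

theorem orbit_IAP3_eq_diagChooseSum_altAffine (d : R) (i j : ℕ) :
    orbit (IAP3 (0 : R) (-d) d d (-(2 * d)) d) i j =
      (-1) ^ i * diagChooseSum (altAffine (i : R)) (j + 2 * i) * d := by
  induction i generalizing j with
  | zero => simpa [orbit] using IAP3_eq_diagChooseSum_altAffine d j
  | succ i ih =>
    have hrec := diagChooseSum_altAffine_add_two (i + 1 : R) (j + 2 * i)
    rw [add_sub_cancel_right] at hrec
    rw [orbit]
    dsimp only
    rw [ih, show (j : ℤ) + 1 = (j + 1 : ℕ) by push_cast; ring, ih,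
      show j + 2 * (i + 1) = j + 2 * i + 2 by ring, show j + 1 + 2 * i = j + 2 * i + 1 by ring,
      Nat.cast_succ, hrec]
    ring

end Orbit

theorem stmt13_general (n : ℕ) (d : ZMod n) :
    ∀ (i j : ℕ), orbit (IAP3 (0 : ZMod n) (-d) d d (-(2 * d)) d) i (j : ℤ) =
      (-1 : ZMod n) ^ i * ∑ k ∈ Finset.Icc 1 (j + 2 * i),
        (k.choose (j + 2 * i - k) : ZMod n) * (-1 : ZMod n) ^ k *
          (((k : ℤ) - (i : ℤ)) : ZMod n) * d := by
  intro i j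
  have hdegenerate : altAffine (i : ZMod n) 0 = 0 ∨ 0 < j + 2 * i := by
    rcases i with _ | i
    · simp [altAffine]
    · right; omega
  rw [orbit_IAP3_eq_diagChooseSum_altAffine, diagChooseSum_eq_sum_Icc _ hdegenerate, mul_assoc,
    sum_mul]
  congr 1
  refine sum_congr rfl fun k _ => ?_
  simp only [altAffine]
  push_cast
  ring

theorem stmt13 (n : ℕ) (hn : Odd n) (d : ZMod n) (hd : IsUnit d) :
    ∀ (i j : ℕ), orbit (IAP3 (0 : ZMod n) (-d) d d (-(2 * d)) d) i (j : ℤ) =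
      (-1 : ZMod n) ^ i * ∑ k ∈ Finset.Icc 1 (j + 2 * i),
        (k.choose (j + 2 * i - k) : ZMod n) * (-1 : ZMod n) ^ k *
          (((k : ℤ) - (i : ℤ)) : ZMod n) * d :=
  stmt13_general n d
end

section
/- Consider the orbit a_{i,j} of the universal integer sequence US = IAP((0,-1,1),(1,-2,1)) under a_{i+1,j} = a_{i,j} + a_{i,j+1}. Then a_{i,i} = 0 for all non-negative integers i. -/
/-- Closed form for the orbit of `IAP3 0 (-1) 1 1 (-2) 1`. -/
def F (i : ℕ) (j : ℤ) : ℤ :=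
  (if (j - i) % 3 = 0 then (j - i) / 3
   else if (j - i) % 3 = 1 then -((i : ℤ) + 1 + 2 * ((j - i) / 3))
   else (i : ℤ) + 1 + (j - i) / 3) * (-1 : ℤ) ^ i

lemma orbit_eq_F : ∀ i : ℕ, ∀ j : ℤ,
    orbit (IAP3 (0 : ℤ) (-1) 1 1 (-2) 1) i j = F i j := by
  intro i
  induction i with
  | zero =>
    intro j
    simp only [orbit, IAP3, F, Nat.cast_zero, sub_zero, pow_zero, mul_one, smul_eq_mul]
    rcases (show j % 3 = 0 ∨ j % 3 = 1 ∨ j % 3 = 2 by omega) with h | h | h <;>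
      simp [h] <;> omega
  | succ i ih =>
    intro j
    simp only [orbit, ih, F]
    push_cast
    have hp : (-1 : ℤ) ^ (i + 1) = (-1) ^ i * (-1) := by ring
    rcases (show ∃ q : ℤ, j - i = 3 * q ∨ j - i = 3 * q + 1 ∨ j - i = 3 * q + 2 by
        exact ⟨(j - i) / 3, by omega⟩) with ⟨q, h | h | h⟩
    · rw [show (j - ((i : ℤ) + 1)) % 3 = 2 by omega,
        show (j - (i : ℤ)) % 3 = 0 by omega,
        show (j + 1 - (i : ℤ)) % 3 = 1 by omega,
        show (j - ((i : ℤ) + 1)) / 3 = q - 1 by omega,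
        show (j - (i : ℤ)) / 3 = q by omega,
        show (j + 1 - (i : ℤ)) / 3 = q by omega]
      norm_num [hp]; ring
    · rw [show (j - ((i : ℤ) + 1)) % 3 = 0 by omega,
        show (j - (i : ℤ)) % 3 = 1 by omega,
        show (j + 1 - (i : ℤ)) % 3 = 2 by omega,
        show (j - ((i : ℤ) + 1)) / 3 = q by omega,
        show (j - (i : ℤ)) / 3 = q by omega,
        show (j + 1 - (i : ℤ)) / 3 = q by omega]
      norm_num [hp]; ring
    · rw [show (j - ((i : ℤ) + 1)) % 3 = 1 by omega,
        show (j - (i : ℤ)) % 3 = 2 by omega,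
        show (j + 1 - (i : ℤ)) % 3 = 0 by omega,
        show (j - ((i : ℤ) + 1)) / 3 = q by omega,
        show (j - (i : ℤ)) / 3 = q by omega,
        show (j + 1 - (i : ℤ)) / 3 = q + 1 by omega]
      norm_num [hp]; ring

theorem stmt14 : ∀ i : ℕ, orbit (IAP3 (0 : ℤ) (-1) 1 1 (-2) 1) i (i : ℤ) = 0 := by
  intro i
  rw [orbit_eq_F, F]
  simp
end

section
/- Every interlaced doubly arithmetic orbit of integers is generated by a sequence of the form S = IAP((a_0,a_1,a_2),(d, -2d-3Σ, d+3Σ)) with Σ = a_0+a_1+a_2, for some integers a_0, a_1, a_2, d. Conversely, every such S generates a (6,3)-interlaced doubly arithmetic orbit, so the space of interlaced doubly arithmetic integer orbits is exactly this 4-parameter family. -/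
def IsIDAO (S : ℤ → ℤ) : Prop :=
  ∃ k1 k2 : ℕ, 0 < k1 ∧ 0 < k2 ∧ ∀ i0 < k1, ∀ j0 < k2, ∀ (i : ℕ) (j : ℤ),
    orbit S (i0 + i * k1) ((j0 : ℤ) + j * k2) =
      orbit S i0 (j0 : ℤ)
        + (i : ℤ) * (orbit S (i0 + k1) (j0 : ℤ) - orbit S i0 (j0 : ℤ))
        + j * (orbit S i0 ((j0 : ℤ) + k2) - orbit S i0 (j0 : ℤ))

/-!
Let `E` be the shift `f ↦ f (· + 1)`, so that `orbit f n = (1 + E) ^ n f`. Taking second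
differences along the grid, the orbit of `S` is `(k₁, k₂)`-interlaced doubly arithmetic exactly
when `A(E)²`, `A(E) B(E)` and `B(E)²` kill `S`, where `A = X ^ k₂ - 1` and `B = (1 + X) ^ k₁ - 1`.

A common complex root `α` of `A` and `B` has `‖α‖ = ‖1 + α‖ = 1`, so it is a primitive cube root
of unity. Since `A` is squarefree, `gcd A B` divides `Φ₃ = X ^ 2 + X + 1` in `ℚ[X]`, and Bézout
puts `Φ₃²` in the ideal `(A², AB, B²)`: every interlaced doubly arithmetic orbit satisfies
`Φ₃(E)² S = 0`. Conversely `Φ₃` divides `X ^ 3 - 1` and `(1 + X) ^ 6 - 1`, which gives `(6, 3)`.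

Finally `Φ₃(E)² S = 0` forces `(E³ - 1)² S = 0`, i.e. `S` is arithmetic on each residue class
mod 3, and the recurrence at `0` and `1` expresses two of the three differences through the
third one and `a₀ + a₁ + a₂`.
-/

open Polynomial

section Endomorphisms

variable {R N : Type*} [CommRing R] [AddCommGroup N] [Module R N]

lemma Polynomial.aeval_apply_eq_zero_of_dvd {T : Module.End R N} {v : N} {p q : R[X]}
    (hpq : p ∣ q) (h : aeval T p v = 0) : aeval T q v = 0 := by
  obtain ⟨r, rfl⟩ := hpq
  rw [mul_comm, map_mul, Module.End.mul_apply, h, map_zero]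

lemma Module.End.pow_apply_eq_add_nsmul {T : Module.End R N} {v : N}
    (h : ((T - 1) ^ 2 : Module.End R N) v = 0) (i : ℕ) : (T ^ i) v = v + i • (T - 1) v := by
  have hfix : T ((T - 1) v) = (T - 1) v := by
    rw [sq, Module.End.mul_apply, LinearMap.sub_apply, Module.End.one_apply] at h
    exact sub_eq_zero.mp h
  induction i with
  | zero => simp
  | succ i ih =>
    rw [pow_succ', Module.End.mul_apply, ih, map_add, map_nsmul, hfix, succ_nsmul,
      LinearMap.sub_apply, Module.End.one_apply]
    abel

end Endomorphisms

section Shift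

variable {R M : Type*} [CommRing R] [AddCommGroup M] [Module R M]

variable (R M) in
def shift : Module.End R (ℤ → M) := LinearMap.funLeft R M (· + 1)

@[simp]
lemma shift_apply (f : ℤ → M) (j : ℤ) : shift R M f j = f (j + 1) := rfl

@[simp]
lemma shift_pow_apply (n : ℕ) (f : ℤ → M) (j : ℤ) : (shift R M ^ n) f j = f (j + n) := by
  induction n generalizing f with
  | zero => simp
  | succ n ih =>
    rw [pow_succ, Module.End.mul_apply, ih, shift_apply]
    push_cast
    ring_nf

lemma one_add_shift_pow_apply (n : ℕ) (f : ℤ → M) : ((1 + shift R M) ^ n) f = orbit f n := by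
  induction n with
  | zero => rfl
  | succ n ih =>
    ext j
    rw [pow_succ', Module.End.mul_apply, ih]
    rfl

variable (R) in
lemma orbit_eq_aeval (f : ℤ → M) (n : ℕ) :
    orbit f n = aeval (shift R M) ((1 + X : R[X]) ^ n) f := by
  simp [one_add_shift_pow_apply]

lemma orbit_orbit (f : ℤ → M) (m n : ℕ) : orbit (orbit f m) n = orbit f (m + n) := by
  rw [orbit_eq_aeval ℤ, orbit_eq_aeval ℤ f m, orbit_eq_aeval ℤ f, ← Module.End.mul_apply,
    ← map_mul, ← pow_add, Nat.add_comm n m]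

lemma aeval_shift_orbit (p : R[X]) (f : ℤ → M) (n : ℕ) :
    aeval (shift R M) p (orbit f n) = orbit (aeval (shift R M) p f) n := by
  rw [orbit_eq_aeval R, orbit_eq_aeval R (aeval (shift R M) p f), ← Module.End.mul_apply,
    ← map_mul, mul_comm, map_mul, Module.End.mul_apply]

lemma aeval_X_pow_mul_one_add_X_pow_apply (f : ℤ → M) (m n : ℕ) (x : ℤ) :
    aeval (shift R M) (X ^ n * (1 + X) ^ m : R[X]) f x = orbit f m (x + n) := by
  rw [map_mul, Module.End.mul_apply, ← orbit_eq_aeval, map_pow, aeval_X, shift_pow_apply]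

lemma apply_add_mul_eq_of_aeval_X_pow_sub_one_sq {f : ℤ → M} {k : ℕ}
    (h : aeval (shift R M) ((X ^ k - 1 : R[X]) ^ 2) f = 0) (x j : ℤ) :
    f (x + j * k) = f x + j • (f (x + k) - f x) := by
  have hper : Function.Periodic (fun y => f (y + k) - f y) k := by
    intro y
    have := congrFun h y
    simp only [sq, map_mul, map_sub, map_pow, aeval_X, map_one, Module.End.mul_apply,
      LinearMap.sub_apply, Module.End.one_apply, Pi.sub_apply, shift_pow_apply,
      Pi.zero_apply] at this
    rw [← sub_eq_zero, ← this]
  induction j using Int.induction_on with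
  | zero => simp
  | succ i ih =>
    have hstep := hper.int_mul i x
    push_cast at hstep ⊢
    rw [show x + (i + 1) * k = x + i * k + k by ring]
    linear_combination (norm := module) hstep + ih
  | pred i ih =>
    have hstep := hper.int_mul (-i - 1) x
    push_cast at hstep ⊢
    rw [show x + (-i - 1) * k + k = x + -i * k by ring] at hstep
    linear_combination (norm := module) ih - hstep

lemma orbit_mul_apply_add_mul {f : ℤ → M} {k1 k2 : ℕ}
    (hAA : aeval (shift R M) ((X ^ k2 - 1 : R[X]) ^ 2) f = 0)
    (hAB : aeval (shift R M) ((X ^ k2 - 1 : R[X]) * ((1 + X) ^ k1 - 1)) f = 0)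
    (hBB : aeval (shift R M) (((1 + X) ^ k1 - 1 : R[X]) ^ 2) f = 0) (i : ℕ) (x j : ℤ) :
    orbit f (i * k1) (x + j * k2)
      = f x + (i : ℤ) • (orbit f k1 x - f x) + j • (f (x + k2) - f x) := by
  set E := shift R M
  set u := aeval E ((1 + X) ^ k1 - 1 : R[X]) f
  have hu : u = orbit f k1 - f := by simp [u, E, orbit_eq_aeval R]
  have hrow : orbit f (i * k1) = f + (i : ℤ) • u := by
    have := Module.End.pow_apply_eq_add_nsmul (T := aeval E ((1 + X : R[X]) ^ k1)) (v := f)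
      (by simpa using hBB) i
    rw [orbit_eq_aeval R, mul_comm, pow_mul, map_pow, this, natCast_zsmul]
    simp [u, E]
  have hAAu : aeval E ((X ^ k2 - 1 : R[X]) ^ 2) u = 0 := by
    rw [← Module.End.mul_apply, ← map_mul]
    exact aeval_apply_eq_zero_of_dvd ⟨X ^ k2 - 1, by ring⟩ hAB
  have hcol : aeval E ((X ^ k2 - 1 : R[X]) ^ 2) (f + (i : ℤ) • u) = 0 := by
    rw [map_add, map_zsmul, hAA, hAAu, smul_zero, add_zero]
  have hper : u (x + k2) = u x := by
    have h := congrFun hAB x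
    rw [map_mul, Module.End.mul_apply] at h
    simpa [E, u, sub_eq_zero] using h
  rw [hrow, apply_add_mul_eq_of_aeval_X_pow_sub_one_sq hcol]
  simp only [Pi.add_apply, Pi.smul_apply]
  rw [hper, hu]
  simp only [Pi.sub_apply]
  module

lemma aeval_shift_eq_zero_of_orbit_affine {f : ℤ → M} {k1 k2 : ℕ}
    (h : ∀ x : ℤ, ∃ a b c : M, ∀ (i : ℕ) (j : ℤ),
      orbit f (i * k1) (x + j * k2) = a + (i : ℤ) • b + j • c) :
    aeval (shift R M) ((X ^ k2 - 1 : R[X]) ^ 2) f = 0 ∧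
      aeval (shift R M) ((X ^ k2 - 1 : R[X]) * ((1 + X) ^ k1 - 1)) f = 0 ∧
      aeval (shift R M) (((1 + X) ^ k1 - 1 : R[X]) ^ 2) f = 0 := by
  set P : ℕ → ℕ → R[X] := fun i j => X ^ (j * k2) * (1 + X) ^ (i * k1)
  have hP : ∀ x i j, aeval (shift R M) (P i j) f x = orbit f (i * k1) (x + (j : ℤ) * k2) := by
    intro x i j
    simp only [P, aeval_X_pow_mul_one_add_X_pow_apply]
    push_cast
    rfl
  have hAA : (X ^ k2 - 1 : R[X]) ^ 2 = P 0 2 - 2 • P 0 1 + P 0 0 := by simp only [P]; ring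
  have hAB : (X ^ k2 - 1 : R[X]) * ((1 + X) ^ k1 - 1) = P 1 1 - P 0 1 - P 1 0 + P 0 0 := by
    simp only [P]; ring
  have hBB : ((1 + X) ^ k1 - 1 : R[X]) ^ 2 = P 2 0 - 2 • P 1 0 + P 0 0 := by simp only [P]; ring
  refine ⟨?_, ?_, ?_⟩ <;> ext x <;> obtain ⟨a, b, c, habc⟩ := h x
    <;> simp only [hAA, hAB, hBB, map_add, map_sub, map_nsmul, LinearMap.add_apply,
      LinearMap.sub_apply, LinearMap.smul_apply, Pi.add_apply, Pi.sub_apply, Pi.smul_apply, hP,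
      habc, Pi.zero_apply] <;> push_cast <;> module

lemma aeval_cyclotomic_three_sq_apply (f : ℤ → M) (y : ℤ) :
    aeval (shift R M) (cyclotomic 3 R ^ 2) f y
      = f y + 2 • f (y + 1) + 3 • f (y + 2) + 2 • f (y + 3) + f (y + 4) := by
  rw [cyclotomic_three, show (X ^ 2 + X + 1 : R[X]) ^ 2
    = X ^ 4 + 2 • X ^ 3 + 3 • X ^ 2 + 2 • X + 1 by simp only [nsmul_eq_mul]; ring]
  simp only [map_add, map_nsmul, map_pow, aeval_X, map_one, LinearMap.add_apply,
    LinearMap.smul_apply, Module.End.one_apply, Pi.add_apply, Pi.smul_apply, shift_pow_apply,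
    shift_apply]
  push_cast
  abel

end Shift

lemma aeval_shift_map_comp {R R' : Type*} [CommRing R] [CommRing R'] (φ : R →+* R') (p : R[X])
    (f : ℤ → R) : aeval (shift R' R') (p.map φ) (φ ∘ f) = φ ∘ aeval (shift R R) p f := by
  induction p using Polynomial.induction_on' with
  | add p q hp hq =>
    rw [Polynomial.map_add, map_add, map_add, LinearMap.add_apply, LinearMap.add_apply, hp, hq]
    ext
    simp
  | monomial n a =>
    ext j
    simp [aeval_monomial]

lemma isIDAO_iff_exists_aeval_shift_eq_zero (S : ℤ → ℤ) :
    IsIDAO S ↔ ∃ k1 k2 : ℕ, 0 < k1 ∧ 0 < k2 ∧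
      aeval (shift ℤ ℤ) ((X ^ k2 - 1 : ℤ[X]) ^ 2) S = 0 ∧
      aeval (shift ℤ ℤ) ((X ^ k2 - 1 : ℤ[X]) * ((1 + X) ^ k1 - 1)) S = 0 ∧
      aeval (shift ℤ ℤ) (((1 + X) ^ k1 - 1 : ℤ[X]) ^ 2) S = 0 := by
  constructor
  · rintro ⟨k1, k2, hk1, hk2, hS⟩
    refine ⟨k1, k2, hk1, hk2, aeval_shift_eq_zero_of_orbit_affine fun x => ?_⟩
    obtain ⟨j0, hj0⟩ : ∃ j0 : ℕ, (j0 : ℤ) = x % k2 :=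
      ⟨_, Int.toNat_of_nonneg (Int.emod_nonneg _ (by omega))⟩
    have hj0k2 : j0 < k2 := by
      have := Int.emod_lt_of_pos x (by omega : (0 : ℤ) < k2)
      omega
    obtain ⟨q, hx⟩ : ∃ q : ℤ, x = j0 + q * k2 :=
      ⟨x / k2, by rw [hj0]; linarith [Int.emod_add_mul_ediv x k2]⟩
    refine ⟨S j0 + q * (S (j0 + k2) - S j0), orbit S k1 j0 - S j0, S (j0 + k2) - S j0,
      fun i j => ?_⟩
    have := hS 0 hk1 j0 hj0k2 i (q + j)
    simp only [zero_add, orbit] at this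
    rw [hx, add_assoc, ← add_mul, this, smul_eq_mul, smul_eq_mul]
    ring
  · rintro ⟨k1, k2, hk1, hk2, hAA, hAB, hBB⟩
    refine ⟨k1, k2, hk1, hk2, fun i0 _ j0 _ i j => ?_⟩
    have hrow : ∀ p : ℤ[X], aeval (shift ℤ ℤ) p S = 0 → aeval (shift ℤ ℤ) p (orbit S i0) = 0 :=
      fun p hp => by rw [aeval_shift_orbit, hp, orbit_eq_aeval ℤ, map_zero]
    rw [← orbit_orbit, orbit_mul_apply_add_mul (hrow _ hAA) (hrow _ hAB) (hrow _ hBB),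
      orbit_orbit, smul_eq_mul, smul_eq_mul]

lemma Squarefree.dvd_of_forall_irreducible_dvd {α : Type*} [CommMonoidWithZero α] [GCDMonoid α]
    [WfDvdMonoid α] {x y : α} (hx : Squarefree x) (h : ∀ p, Irreducible p → p ∣ x → p ∣ y) :
    x ∣ y := by
  nontriviality α
  obtain ⟨u, hu⟩ := gcd_dvd_left x y
  have hunit : IsUnit u := by
    by_contra hnu
    have hu0 : u ≠ 0 := by rintro rfl; exact hx.ne_zero (by simpa using hu)
    obtain ⟨p, hp, hpu⟩ := WfDvdMonoid.exists_irreducible_factor hnu hu0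
    have hpx : p ∣ x := hu ▸ dvd_mul_of_dvd_right hpu _
    have hpp : p * p ∣ x := hu ▸ mul_dvd_mul (dvd_gcd hpx (h p hp hpx)) hpu
    exact hp.not_isUnit (hx p hpp)
  rw [hu]
  exact ((Units.mul_right_dvd (u := hunit.unit)).mpr dvd_rfl).trans (gcd_dvd_right x y)

lemma isRoot_cyclotomic_three_of_pow_eq_one {k1 k2 : ℕ} (hk1 : k1 ≠ 0) (hk2 : k2 ≠ 0) {α : ℂ}
    (h2 : α ^ k2 = 1) (h1 : (1 + α) ^ k1 = 1) : (cyclotomic 3 ℂ).IsRoot α := by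
  have hα : α * starRingEnd ℂ α = 1 := by
    rw [Complex.mul_conj, Complex.normSq_eq_norm_sq, Complex.norm_eq_one_of_pow_eq_one h2 hk2]
    norm_num
  have hα1 : (1 + α) * starRingEnd ℂ (1 + α) = 1 := by
    rw [Complex.mul_conj, Complex.normSq_eq_norm_sq, Complex.norm_eq_one_of_pow_eq_one h1 hk1]
    norm_num
  have hconj : starRingEnd ℂ α = -1 - α := by
    rw [map_add, map_one] at hα1
    linear_combination hα1 - hα
  rw [cyclotomic_three, IsRoot, eval_add, eval_add, eval_pow, eval_X, eval_one]
  linear_combination α * hconj - hα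

lemma Irreducible.dvd_cyclotomic_three {k1 k2 : ℕ} (hk1 : k1 ≠ 0) (hk2 : k2 ≠ 0) {p : ℚ[X]}
    (hp : Irreducible p) (hpA : p ∣ X ^ k2 - 1) (hpB : p ∣ (1 + X) ^ k1 - 1) :
    p ∣ cyclotomic 3 ℚ := by
  obtain ⟨α, hα⟩ := Complex.exists_root (f := p.map (algebraMap ℚ ℂ))
    (by rw [degree_map]; exact degree_pos_of_irreducible hp)
  have hpα : aeval α p = 0 := by rwa [aeval_def, ← eval_map]
  have root_of_dvd : ∀ q : ℚ[X], p ∣ q → aeval α q = 0 := fun q ⟨r, hr⟩ => by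
    rw [hr, map_mul, hpα, zero_mul]
  have h2 : α ^ k2 = 1 := by simpa [sub_eq_zero] using root_of_dvd _ hpA
  have h1 : (1 + α) ^ k1 = 1 := by simpa [sub_eq_zero] using root_of_dvd _ hpB
  have hΦ : aeval α (cyclotomic 3 ℚ) = 0 := by
    rw [aeval_def, eval₂_eq_eval_map, map_cyclotomic]
    exact isRoot_cyclotomic_three_of_pow_eq_one hk1 hk2 h2 h1
  by_contra hndvd
  obtain ⟨u, v, huv⟩ := hp.coprime_iff_not_dvd.mpr hndvd
  have := congrArg (aeval α) huv
  rw [map_add, map_mul, map_mul, hpα, hΦ, map_one] at this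
  simp at this

lemma gcd_dvd_cyclotomic_three {k1 k2 : ℕ} (hk1 : k1 ≠ 0) (hk2 : k2 ≠ 0) :
    gcd (X ^ k2 - 1 : ℚ[X]) ((1 + X) ^ k1 - 1) ∣ cyclotomic 3 ℚ := by
  have hsep : (X ^ k2 - 1 : ℚ[X]).Separable := by
    simpa using separable_X_pow_sub_C (1 : ℚ) (by exact_mod_cast hk2) one_ne_zero
  refine (hsep.squarefree.gcd_left _).dvd_of_forall_irreducible_dvd fun p hp hpd => ?_
  exact hp.dvd_cyclotomic_three hk1 hk2 (hpd.trans (gcd_dvd_left _ _))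
    (hpd.trans (gcd_dvd_right _ _))

lemma aeval_cyclotomic_three_sq_apply_eq_zero {N : Type*} [AddCommGroup N] [Module ℚ N]
    {T : Module.End ℚ N} {v : N} {k1 k2 : ℕ} (hk1 : k1 ≠ 0) (hk2 : k2 ≠ 0)
    (hAA : aeval T ((X ^ k2 - 1 : ℚ[X]) ^ 2) v = 0)
    (hAB : aeval T ((X ^ k2 - 1 : ℚ[X]) * ((1 + X) ^ k1 - 1)) v = 0)
    (hBB : aeval T (((1 + X) ^ k1 - 1 : ℚ[X]) ^ 2) v = 0) :
    aeval T (cyclotomic 3 ℚ ^ 2) v = 0 := by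
  obtain ⟨a, b, hab⟩ := (gcd_dvd_iff_exists _ _).mp (gcd_dvd_cyclotomic_three hk1 hk2)
  rw [hab, show ((X ^ k2 - 1) * a + ((1 + X) ^ k1 - 1) * b) ^ 2 =
    a ^ 2 * (X ^ k2 - 1) ^ 2 + 2 * a * b * ((X ^ k2 - 1) * ((1 + X) ^ k1 - 1))
      + b ^ 2 * ((1 + X) ^ k1 - 1) ^ 2 by ring]
  rw [map_add, map_add, LinearMap.add_apply, LinearMap.add_apply,
    aeval_apply_eq_zero_of_dvd (dvd_mul_left _ _) hAA,
    aeval_apply_eq_zero_of_dvd (dvd_mul_left _ _) hAB,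
    aeval_apply_eq_zero_of_dvd (dvd_mul_left _ _) hBB, add_zero, add_zero]

lemma isIDAO_iff_aeval_cyclotomic_three_sq_eq_zero (S : ℤ → ℤ) :
    IsIDAO S ↔ aeval (shift ℤ ℤ) (cyclotomic 3 ℤ ^ 2) S = 0 := by
  rw [isIDAO_iff_exists_aeval_shift_eq_zero]
  constructor
  · rintro ⟨k1, k2, hk1, hk2, hAA, hAB, hBB⟩
    -- the gcd argument needs the principal ideal domain `ℚ[X]`
    have hcast : ∀ p : ℤ[X], aeval (shift ℤ ℤ) p S = 0 →
        aeval (shift ℚ ℚ) (p.map (Int.castRingHom ℚ)) (Int.castRingHom ℚ ∘ S) = 0 :=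
      fun p hp => by rw [aeval_shift_map_comp, hp]; rfl
    have hΦ := aeval_cyclotomic_three_sq_apply_eq_zero (v := Int.castRingHom ℚ ∘ S)
      hk1.ne' hk2.ne' (by simpa using hcast _ hAA) (by simpa using hcast _ hAB)
      (by simpa using hcast _ hBB)
    rw [← map_cyclotomic 3 (Int.castRingHom ℚ), ← Polynomial.map_pow, aeval_shift_map_comp] at hΦ
    ext y
    simpa using congrFun hΦ y
  · intro h
    have hA : cyclotomic 3 ℤ ∣ X ^ 3 - 1 := cyclotomic.dvd_X_pow_sub_one 3 ℤ
    have hB : cyclotomic 3 ℤ ∣ (1 + X) ^ 6 - 1 :=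
      ⟨X * (X + 2) * (X ^ 2 + 3 * X + 3), by rw [cyclotomic_three]; ring⟩
    exact ⟨6, 3, by norm_num, by norm_num,
      aeval_apply_eq_zero_of_dvd (pow_dvd_pow_of_dvd hA 2) h,
      aeval_apply_eq_zero_of_dvd (sq (cyclotomic 3 ℤ) ▸ mul_dvd_mul hA hB) h,
      aeval_apply_eq_zero_of_dvd (pow_dvd_pow_of_dvd hB 2) h⟩

lemma eq_IAP3_of_apply_add_mul_three {G : Type*} [AddCommGroup G] {f : ℤ → G}
    (hf : ∀ r q : ℤ, f (r + q * 3) = f r + q • (f (r + 3) - f r)) :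
    f = IAP3 (f 0) (f 1) (f 2) (f 3 - f 0) (f 4 - f 1) (f 5 - f 2) := by
  funext j
  have hj := hf (j % 3) (j / 3)
  rw [show j % 3 + j / 3 * 3 = j by omega] at hj
  rw [hj, IAP3]
  split_ifs with h0 h1
  · rw [h0]; norm_num
  · rw [h1]; norm_num
  · rw [show j % 3 = 2 by omega]; norm_num

lemma aeval_X_pow_three_sub_one_sq_IAP3 {G : Type*} [AddCommGroup G] (a0 a1 a2 d0 d1 d2 : G) :
    aeval (shift ℤ G) ((X ^ 3 - 1 : ℤ[X]) ^ 2) (IAP3 a0 a1 a2 d0 d1 d2) = 0 := by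
  ext y
  rw [show (X ^ 3 - 1 : ℤ[X]) ^ 2 = X ^ 6 - 2 • X ^ 3 + 1 by simp only [nsmul_eq_mul]; ring]
  simp only [map_add, map_sub, map_nsmul, map_pow, aeval_X, map_one, LinearMap.add_apply,
    LinearMap.sub_apply, LinearMap.smul_apply, Module.End.one_apply, Pi.add_apply, Pi.sub_apply,
    Pi.smul_apply, shift_pow_apply, Pi.zero_apply, IAP3]
  push_cast
  rw [show (y + 6) % 3 = y % 3 by omega, show (y + 3) % 3 = y % 3 by omega,
    show (y + 6) / 3 = y / 3 + 2 by omega, show (y + 3) / 3 = y / 3 + 1 by omega]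
  split_ifs <;> module

lemma aeval_cyclotomic_three_sq_eq_zero_iff (S : ℤ → ℤ) :
    aeval (shift ℤ ℤ) (cyclotomic 3 ℤ ^ 2) S = 0 ↔ ∃ a0 a1 a2 d : ℤ,
      S = IAP3 a0 a1 a2 d (-(2 * d) - 3 * (a0 + a1 + a2)) (d + 3 * (a0 + a1 + a2)) := by
  constructor
  · intro h
    have h3 : aeval (shift ℤ ℤ) ((X ^ 3 - 1 : ℤ[X]) ^ 2) S = 0 :=
      aeval_apply_eq_zero_of_dvd (pow_dvd_pow_of_dvd (cyclotomic.dvd_X_pow_sub_one 3 ℤ) 2) h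
    have h0 := congrFun h 0
    have h1 := congrFun h 1
    simp only [aeval_cyclotomic_three_sq_apply, Pi.zero_apply] at h0 h1
    norm_num at h0 h1
    refine ⟨S 0, S 1, S 2, S 3 - S 0,
      (eq_IAP3_of_apply_add_mul_three (apply_add_mul_eq_of_aeval_X_pow_sub_one_sq h3)).trans ?_⟩
    congr 1 <;> linarith
  · rintro ⟨a0, a1, a2, d, rfl⟩
    set g := IAP3 a0 a1 a2 d (-(2 * d) - 3 * (a0 + a1 + a2)) (d + 3 * (a0 + a1 + a2))
    set h := aeval (shift ℤ ℤ) (cyclotomic 3 ℤ ^ 2) g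
    -- `h` is affine since `(X - 1)² Φ₃² = (X³ - 1)²`, and it vanishes at `0` and `1`
    have hh : aeval (shift ℤ ℤ) ((X ^ 1 - 1 : ℤ[X]) ^ 2) h = 0 := by
      rw [← Module.End.mul_apply, ← map_mul, show (X ^ 1 - 1 : ℤ[X]) ^ 2 * cyclotomic 3 ℤ ^ 2
        = (X ^ 3 - 1) ^ 2 by rw [cyclotomic_three]; ring]
      exact aeval_X_pow_three_sub_one_sq_IAP3 _ _ _ _ _ _
    have h0 : h 0 = 0 := by
      simp only [h, aeval_cyclotomic_three_sq_apply]
      simp [g, IAP3]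
      ring
    have h1 : h 1 = 0 := by
      simp only [h, aeval_cyclotomic_three_sq_apply]
      simp [g, IAP3]
      ring
    ext j
    have hline := apply_add_mul_eq_of_aeval_X_pow_sub_one_sq hh 0 j
    simp only [Nat.cast_one, mul_one, zero_add, h0, h1] at hline
    simpa using hline

theorem stmt19 (S : ℤ → ℤ) :
    IsIDAO S ↔ ∃ a0 a1 a2 d : ℤ,
      S = IAP3 a0 a1 a2 d (-(2 * d) - 3 * (a0 + a1 + a2)) (d + 3 * (a0 + a1 + a2)) :=
  (isIDAO_iff_aeval_cyclotomic_three_sq_eq_zero S).trans (aeval_cyclotomic_three_sq_eq_zero_iff S)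
end
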